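/- arXiv:2109.07820 — 6 statements merged into one kernel-verified Lean document; each statement's English description precedes it below -/
import Mathlib

section
/- Let γ : [0,1] → ℝ^n be an injective Lipschitz path with constant speed (|γ'| equal to a constant almost everywhere). Then for every Lebesgue-measurable set A ⊂ [0,1], H^1(γ(A)) = Lip(γ) · L(A). -/
/-!
The Lipschitz bound gives `μH[1] (γ '' s) ≤ K * volume s` for every `s`; since `[0,1]` splits
into `A` and its complement, equality for every measurable `A` follows once
`K ≤ μH[1] (γ '' [0,1])`. For an injective continuous path the images of consecutive pieces of a
partition meet only in single points, and each has `μH[1]` at least the distance between its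
endpoints, so every inscribed polygon is no longer than `μH[1] (γ '' [0,1])`. Averaging the
polygons of mesh `h` over all shifts bounds `∫ ‖γ (t + h) - γ t‖ / h dt` by the same quantity,
and Fatou's lemma as `h → 0` gives `∫₀¹ ‖γ'‖ ≤ μH[1] (γ '' [0,1])`, whose left side is `K`.
-/

open MeasureTheory Set Filter Topology
open scoped ENNReal NNReal

noncomputable section

/-- Euclidean space `ℝ^n`. -/
abbrev Euc (n : ℕ) : Type := EuclideanSpace ℝ (Fin n)

/-- The hypercube `[-1,1]^n`. -/
def cube (n : ℕ) : Set (Euc n) := {x | ∀ i, |x i| ≤ 1}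

theorem measure_image_eq_of_forall_le {α β : Type*} [MeasurableSpace α] [MeasurableSpace β]
    {f : α → β} {μ : Measure α} {ν : Measure β} {U A : Set α}
    (hle : ∀ s ⊆ U, ν (f '' s) ≤ μ s) (hU : μ U ≤ ν (f '' U)) (hμU : μ U ≠ ∞)
    (hA : NullMeasurableSet A μ) (hAU : A ⊆ U) : ν (f '' A) = μ A := by
  refine le_antisymm (hle A hAU) ?_
  have hfin : μ (U \ A) ≠ ∞ := ((measure_mono sdiff_subset).trans_lt hμU.lt_top).ne
  refine (ENNReal.add_le_add_iff_right hfin).1 ?_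
  calc μ A + μ (U \ A) = μ U := by rw [← measure_inter_add_sdiff₀ U hA, inter_eq_right.2 hAU]
    _ ≤ ν (f '' U) := hU
    _ = ν (f '' A ∪ f '' (U \ A)) := by rw [← image_union, union_sdiff_cancel hAU]
    _ ≤ ν (f '' A) + ν (f '' (U \ A)) := measure_union_le _ _
    _ ≤ ν (f '' A) + μ (U \ A) := by grw [hle _ sdiff_subset]

theorem setLIntegral_Ico_add_right (f : ℝ → ℝ≥0∞) (a b c : ℝ) :
    ∫⁻ x in Ico a b, f (x + c) = ∫⁻ y in Ico (a + c) (b + c), f y := by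
  rw [← (measurePreserving_add_right volume c).setLIntegral_comp_preimage_emb
    (measurableEmbedding_addRight c) f, preimage_add_const_Ico, add_sub_cancel_right,
    add_sub_cancel_right]

theorem setLIntegral_Ico_eq_sum {f : ℝ → ℝ≥0∞} (a : ℝ) {h : ℝ} (hh : 0 ≤ h) (m : ℕ) :
    ∫⁻ t in Ico a (a + m * h), f t =
      ∑ k ∈ Finset.range m, ∫⁻ s in Ico a (a + h), f (s + k * h) := by
  induction m with
  | zero => simp
  | succ m ih =>
    have hsplit : Ico a (a + (m + 1 : ℕ) * h) =
        Ico a (a + m * h) ∪ Ico (a + m * h) (a + m * h + h) := by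
      rw [Ico_union_Ico_eq_Ico (by nlinarith [m.cast_nonneg (α := ℝ)]) (by linarith)]
      push_cast; ring_nf
    rw [hsplit, lintegral_union measurableSet_Ico Ico_disjoint_Ico_same, ih,
      Finset.sum_range_succ, setLIntegral_Ico_add_right, add_right_comm a h]

section Metric

variable {E : Type*} [MetricSpace E] [MeasurableSpace E] [BorelSpace E]

theorem IsPreconnected.edist_le_hausdorffMeasure {S : Set E} (hS : IsPreconnected S)
    {x y : E} (hx : x ∈ S) (hy : y ∈ S) : edist x y ≤ μH[1] S := by
  have hdist : LipschitzWith 1 (dist · x) := LipschitzWith.dist_left x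
  have hIcc : Icc 0 (dist y x) ⊆ (dist · x) '' S := by
    simpa using (hS.image _ hdist.continuous.continuousOn).Icc_subset (mem_image_of_mem _ hx)
      (mem_image_of_mem _ hy)
  calc edist x y = volume (Icc 0 (dist y x)) := by
        rw [Real.volume_Icc, sub_zero, edist_comm, edist_dist]
    _ ≤ μH[1] ((dist · x) '' S) := by rw [← hausdorffMeasure_real]; exact measure_mono hIcc
    _ ≤ μH[1] S := by simpa using hdist.hausdorffMeasure_image_le zero_le_one S

theorem hausdorffMeasure_image_Icc_add_image_Icc {γ : ℝ → E} {a b c : ℝ} (hab : a ≤ b)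
    (hbc : b ≤ c) (hγ : ContinuousOn γ (Icc a c)) (hinj : InjOn γ (Icc a c)) :
    μH[1] (γ '' Icc a b) + μH[1] (γ '' Icc b c) = μH[1] (γ '' Icc a c) := by
  have hab_sub : Icc a b ⊆ Icc a c := Icc_subset_Icc_right hbc
  have hbc_sub : Icc b c ⊆ Icc a c := Icc_subset_Icc_left hab
  have hinter : γ '' Icc a b ∩ γ '' Icc b c = {γ b} := by
    rw [← hinj.image_inter hab_sub hbc_sub, Icc_inter_Icc_eq_singleton hab hbc, image_singleton]
  have hmeas : NullMeasurableSet (γ '' Icc b c) μH[1] :=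
    (isCompact_Icc.image_of_continuousOn (hγ.mono hbc_sub)).isClosed.nullMeasurableSet
  have := Measure.nullSingletonClass_hausdorff E zero_lt_one
  rw [← measure_union_add_inter₀ _ hmeas, hinter, ← image_union, Icc_union_Icc_eq_Icc hab hbc,
    measure_singleton, add_zero]

theorem sum_edist_le_hausdorffMeasure_image {γ : ℝ → E} {p : ℕ → ℝ} (hp : Monotone p) (m : ℕ)
    (hγ : ContinuousOn γ (Icc (p 0) (p m))) (hinj : InjOn γ (Icc (p 0) (p m))) :
    ∑ j ∈ Finset.range m, edist (γ (p j)) (γ (p (j + 1))) ≤ μH[1] (γ '' Icc (p 0) (p m)) := by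
  induction m with
  | zero => simp
  | succ m ih =>
    have hsub : Icc (p 0) (p m) ⊆ Icc (p 0) (p (m + 1)) := Icc_subset_Icc_right (hp m.le_succ)
    have hlast : edist (γ (p m)) (γ (p (m + 1))) ≤ μH[1] (γ '' Icc (p m) (p (m + 1))) :=
      (isPreconnected_Icc.image γ (hγ.mono (Icc_subset_Icc_left (hp m.zero_le))))
        |>.edist_le_hausdorffMeasure (mem_image_of_mem γ (left_mem_Icc.2 (hp m.le_succ)))
          (mem_image_of_mem γ (right_mem_Icc.2 (hp m.le_succ)))
    rw [Finset.sum_range_succ, ← hausdorffMeasure_image_Icc_add_image_Icc (hp m.zero_le)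
      (hp m.le_succ) hγ hinj]
    exact add_le_add (ih (hγ.mono hsub) (hinj.mono hsub)) hlast

theorem lintegral_edist_shift_le {γ : ℝ → E} (hγ : Continuous γ) {a h : ℝ} (hh : 0 ≤ h)
    (m : ℕ) (hinj : InjOn γ (Icc a (a + (m + 1) * h))) :
    ∫⁻ t in Ico a (a + m * h), edist (γ t) (γ (t + h)) ≤
      ENNReal.ofReal h * μH[1] (γ '' Icc a (a + (m + 1) * h)) := by
  set H := μH[1] (γ '' Icc a (a + (m + 1) * h))
  have hpolygon : ∀ s ∈ Ico a (a + h),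
      ∑ k ∈ Finset.range m, edist (γ (s + k * h)) (γ (s + k * h + h)) ≤ H := by
    intro s hs
    have hp : Monotone fun j : ℕ => s + j * h := fun i j hij => by
      simp only
      gcongr
    have hsub : Icc (s + (0 : ℕ) * h) (s + m * h) ⊆ Icc a (a + (m + 1) * h) :=
      Icc_subset_Icc (by simpa using hs.1) (by nlinarith [hs.2])
    calc ∑ k ∈ Finset.range m, edist (γ (s + k * h)) (γ (s + k * h + h))
        = ∑ k ∈ Finset.range m, edist (γ (s + k * h)) (γ (s + (k + 1 : ℕ) * h)) := by
          refine Finset.sum_congr rfl fun k _ => ?_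
          push_cast; ring_nf
      _ ≤ μH[1] (γ '' Icc (s + (0 : ℕ) * h) (s + m * h)) :=
          sum_edist_le_hausdorffMeasure_image hp m hγ.continuousOn (hinj.mono hsub)
      _ ≤ H := measure_mono (image_mono hsub)
  have hmeas : ∀ k : ℕ, Measurable fun s => edist (γ (s + k * h)) (γ (s + k * h + h)) :=
    fun k => Continuous.measurable (by fun_prop)
  calc ∫⁻ t in Ico a (a + m * h), edist (γ t) (γ (t + h))
      = ∫⁻ s in Ico a (a + h),
          ∑ k ∈ Finset.range m, edist (γ (s + k * h)) (γ (s + k * h + h)) := by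
        rw [setLIntegral_Ico_eq_sum a hh m, lintegral_finsetSum _ fun k _ => hmeas k]
    _ ≤ ∫⁻ _ in Ico a (a + h), H := setLIntegral_mono measurable_const hpolygon
    _ = ENNReal.ofReal h * H := by
        rw [setLIntegral_const, Real.volume_Ico, add_sub_cancel_left, mul_comm]

end Metric

section Normed

variable {E : Type*} [NormedAddCommGroup E] [NormedSpace ℝ E]

theorem enorm_deriv_le_liminf_edist {γ : ℝ → E} (t : ℝ) {h : ℕ → ℝ}
    (hh : Tendsto h atTop (𝓝[>] 0)) :
    ‖deriv γ t‖ₑ ≤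
      liminf (fun N => ENNReal.ofReal (h N)⁻¹ * edist (γ t) (γ (t + h N))) atTop := by
  by_cases hγ : DifferentiableAt ℝ γ t
  swap; · simp [deriv_zero_of_not_differentiableAt hγ]
  refine ((hγ.hasDerivAt.tendsto_slope_zero_right.comp hh).enorm.congr' ?_).liminf_eq.ge
  filter_upwards [hh self_mem_nhdsWithin] with N (hN : 0 < h N)
  rw [Function.comp_apply, enorm_smul, edist_comm, edist_eq_enorm_sub,
    Real.enorm_of_nonneg (inv_nonneg.2 hN.le)]

variable [MeasurableSpace E] [BorelSpace E]

theorem lintegral_enorm_deriv_le_hausdorffMeasure_image {γ : ℝ → E} (hγ : Continuous γ)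
    {a b : ℝ} (hinj : InjOn γ (Icc a b)) :
    ∫⁻ t in Icc a b, ‖deriv γ t‖ₑ ≤ μH[1] (γ '' Icc a b) := by
  rcases le_or_gt b a with hba | hab
  · rw [setLIntegral_measure_zero _ _ (by simp [Real.volume_Icc, hba])]
    exact bot_le
  set h : ℕ → ℝ := fun N => (b - a) / (N + 1)
  have hpos : ∀ N, 0 < h N := fun N => by positivity
  have hend : ∀ N : ℕ, a + (N + 1) * h N = b := fun N => by simp only [h]; field_simp; ring
  have hh : Tendsto h atTop (𝓝[>] 0) := by
    refine tendsto_nhdsWithin_iff.2 ⟨?_, Eventually.of_forall hpos⟩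
    simpa [h, Function.comp_def] using
      (tendsto_const_div_atTop_nhds_zero_nat (b - a)).comp (tendsto_add_atTop_nat 1)
  set G : ℕ → ℝ → ℝ≥0∞ := fun N => (Ico a (a + N * h N)).indicator
    fun t => ENNReal.ofReal (h N)⁻¹ * edist (γ t) (γ (t + h N))
  have hedist : ∀ N, Measurable fun t => edist (γ t) (γ (t + h N)) := fun N =>
    Continuous.measurable (by fun_prop)
  have hGmeas : ∀ N, Measurable (G N) := fun N =>
    ((hedist N).const_mul _).indicator measurableSet_Ico
  have hGint : ∀ N, ∫⁻ t, G N t ≤ μH[1] (γ '' Icc a b) := by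
    intro N
    have hshift := lintegral_edist_shift_le hγ (hpos N).le N (by rwa [hend N])
    rw [hend N] at hshift
    rw [lintegral_indicator measurableSet_Ico, lintegral_const_mul _ (hedist N)]
    calc _ ≤ ENNReal.ofReal (h N)⁻¹ * (ENNReal.ofReal (h N) * μH[1] (γ '' Icc a b)) := by
          gcongr
      _ = _ := by
          rw [← mul_assoc, ← ENNReal.ofReal_mul (inv_nonneg.2 (hpos N).le),
            inv_mul_cancel₀ (hpos N).ne', ENNReal.ofReal_one, one_mul]
  have hGlim : ∀ t ∈ Ioo a b, ‖deriv γ t‖ₑ ≤ liminf (fun N => G N t) atTop := by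
    intro t ht
    refine (enorm_deriv_le_liminf_edist t hh).trans_eq (liminf_congr ?_)
    have : Tendsto (fun N => b - h N) atTop (𝓝 b) := by
      simpa using (tendsto_nhds_of_tendsto_nhdsWithin hh).const_sub b
    filter_upwards [this.eventually_const_lt ht.2] with N hN
    have hmem : t ∈ Ico a (a + N * h N) := ⟨ht.1.le, by linarith [hend N]⟩
    simp only [G, indicator_of_mem hmem]
  calc ∫⁻ t in Icc a b, ‖deriv γ t‖ₑ = ∫⁻ t in Ioo a b, ‖deriv γ t‖ₑ := by
        rw [restrict_Ioo_eq_restrict_Icc]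
    _ ≤ ∫⁻ t in Ioo a b, liminf (fun N => G N t) atTop :=
        setLIntegral_mono' measurableSet_Ioo hGlim
    _ ≤ ∫⁻ t, liminf (fun N => G N t) atTop := setLIntegral_le_lintegral _ _
    _ ≤ liminf (fun N => ∫⁻ t, G N t) atTop := lintegral_liminf_le hGmeas
    _ ≤ μH[1] (γ '' Icc a b) := liminf_le_of_frequently_le' (Frequently.of_forall hGint)

end Normed

/-- For an injective constant-speed Lipschitz path `γ` with speed (and Lipschitz constant) `K`,
`H^1(γ(A)) = Lip(γ) · L(A)` for every measurable `A ⊆ [0,1]`. -/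
theorem hausdorff_image_eq_of_injOn_constant_speed {n : ℕ} (γ : ℝ → Euc n) (K : ℝ≥0)
    (hγ : LipschitzWith K γ) (hinj : InjOn γ (Icc (0:ℝ) 1))
    (hspeed : ∀ᵐ t ∂(volume.restrict (Icc (0:ℝ) 1)), ‖deriv γ t‖ = (K : ℝ))
    (A : Set ℝ) (hA : MeasurableSet A) (hA1 : A ⊆ Icc (0:ℝ) 1) :
    μH[1] (γ '' A) = (K : ℝ≥0∞) * volume A := by
  have hle : ∀ s, μH[1] (γ '' s) ≤ ((K : ℝ≥0∞) • volume) s := fun s => by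
    simpa [hausdorffMeasure_real] using hγ.hausdorffMeasure_image_le zero_le_one s
  have hlength : ((K : ℝ≥0∞) • volume) (Icc (0:ℝ) 1) ≤ μH[1] (γ '' Icc 0 1) :=
    calc ((K : ℝ≥0∞) • volume) (Icc (0:ℝ) 1) = ∫⁻ t in Icc (0:ℝ) 1, ‖deriv γ t‖ₑ := by
          rw [lintegral_congr_ae (hspeed.mono fun t ht => by
              rw [← ofReal_norm, ht, ENNReal.ofReal_coe_nnreal]),
            setLIntegral_const, Measure.smul_apply, smul_eq_mul]
      _ ≤ μH[1] (γ '' Icc 0 1) :=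
          lintegral_enorm_deriv_le_hausdorffMeasure_image hγ.continuous hinj
  rw [measure_image_eq_of_forall_le (fun s _ => hle s) hlength (by simp [Real.volume_Icc])
    hA.nullMeasurableSet hA1, Measure.smul_apply, smul_eq_mul]
end
end

section
/- Let γ : [0,1] → ℝ^n be an injective Lipschitz path, f : γ([0,1]) → ℝ Borel measurable and nonnegative, and A ⊂ [0,1] Lebesgue measurable. Then ∫_{γ(A)} f dH^1 = ∫_A f(γ(t)) |γ'(t)| dt. -/
open MeasureTheory Set Filter Topology
open scoped ENNReal NNReal

noncomputable section

/-!
Pull `μH[1]` back along `γ` to a finite measure `ν` on `[0,1]`, so that `ν B = μH[1] (γ '' B)`.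
At an interior point `x` the density of `ν` is the limit of `μH[1] (γ '' [x-r, x+r]) / 2r`, and
the arc `γ '' [x-r, x+r]` has measure at least `‖γ (x+r) - γ (x-r)‖`, so this density is at least
`‖γ' x‖`. On the other hand the total mass `μH[1] (γ '' [0,1])` is at most `∫ ‖γ'‖`: cover the arc
by the images of short subintervals, whose diameters are bounded by the integral of `‖γ'‖` over
them. A measure that dominates `‖γ'‖ dt` without having larger total mass equals it, and the
formula is the change of variables `t ↦ γ t` for `ν`.
-/

theorem edist_le_hausdorffMeasure_image_Icc {X : Type*} [MetricSpace X] [MeasurableSpace X]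
    [BorelSpace X] {γ : ℝ → X} {a b : ℝ} (hγ : ContinuousOn γ (Icc a b)) (hab : a ≤ b) :
    edist (γ a) (γ b) ≤ μH[1] (γ '' Icc a b) := by
  set φ : X → ℝ := fun x => dist x (γ a)
  have hφ : LipschitzWith 1 φ := LipschitzWith.dist_left (γ a)
  have hsub : Icc 0 (dist (γ b) (γ a)) ⊆ φ '' (γ '' Icc a b) := by
    rw [← image_comp]
    simpa [φ] using intermediate_value_Icc hab (hφ.continuous.comp_continuousOn hγ)
  calc edist (γ a) (γ b) = volume (Icc 0 (dist (γ b) (γ a))) := by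
        rw [Real.volume_Icc, sub_zero, edist_dist, dist_comm]
    _ = μH[1] (Icc 0 (dist (γ b) (γ a))) := by rw [hausdorffMeasure_real]
    _ ≤ μH[1] (φ '' (γ '' Icc a b)) := measure_mono hsub
    _ ≤ μH[1] (γ '' Icc a b) := by
        simpa using hφ.hausdorffMeasure_image_le zero_le_one (γ '' Icc a b)

theorem HasDerivAt.tendsto_symmetric_slope {E : Type*} [NormedAddCommGroup E] [NormedSpace ℝ E]
    {γ : ℝ → E} {γ' : E} {x : ℝ} (hγ : HasDerivAt γ γ' x) :
    Tendsto (fun r : ℝ => (2 * r)⁻¹ • (γ (x + r) - γ (x - r))) (𝓝[>] 0) (𝓝 γ') := by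
  have hF : HasDerivAt (fun r => γ (x + r) - γ (x - r)) (γ' - -γ') 0 :=
    (HasDerivAt.comp_const_add x 0 (by simpa using hγ)).sub
      (HasDerivAt.comp_const_sub x 0 (by simpa using hγ))
  have := ((hasDerivAt_iff_tendsto_slope_zero.1 hF).mono_left
    (nhdsWithin_mono _ fun r (hr : 0 < r) => hr.ne')).const_smul (2⁻¹ : ℝ)
  rw [sub_neg_eq_add, ← two_smul ℝ γ', smul_smul, inv_mul_cancel₀ two_ne_zero, one_smul] at this
  refine this.congr fun r => ?_
  simp [smul_smul, mul_comm]

section Pullback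

variable {X : Type*} [MetricSpace X] [MeasurableSpace X] [BorelSpace X]

def hausdorffPullback (γ : ℝ → X) (s : Set ℝ) : Measure ℝ :=
  (μH[1].comap (s.domRestrict γ)).map (↑)

theorem hausdorffPullback_apply {γ : ℝ → X} {s B : Set ℝ} (hs : MeasurableSet s)
    (hγ : ContinuousOn γ s) (hinj : InjOn γ s) (hB : MeasurableSet B) :
    hausdorffPullback γ s B = μH[1] (γ '' (B ∩ s)) := by
  rw [hausdorffPullback, Measure.map_apply measurable_subtype_coe hB,
    (hγ.measurableEmbedding hs hinj).comap_apply, domRestrict_eq, image_comp,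
    Subtype.image_preimage_coe, inter_comm]

theorem map_hausdorffPullback_restrict {γ : ℝ → X} {s B : Set ℝ} (hs : MeasurableSet s)
    (hγ : Continuous γ) (hinj : InjOn γ s) (hB : MeasurableSet B) (hBs : B ⊆ s) :
    ((hausdorffPullback γ s).restrict B).map γ = μH[1].restrict (γ '' B) := by
  ext C hC
  rw [Measure.map_apply hγ.measurable hC, Measure.restrict_apply (hγ.measurable hC),
    hausdorffPullback_apply hs hγ.continuousOn hinj ((hγ.measurable hC).inter hB),
    inter_eq_self_of_subset_left (inter_subset_right.trans hBs), image_preimage_inter,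
    Measure.restrict_apply hC, inter_comm]

theorem LipschitzWith.isFiniteMeasure_hausdorffPullback_Icc {γ : ℝ → X} {K : ℝ≥0} {a b : ℝ}
    (hγ : LipschitzWith K γ) (hinj : InjOn γ (Icc a b)) :
    IsFiniteMeasure (hausdorffPullback γ (Icc a b)) := by
  constructor
  rw [hausdorffPullback_apply measurableSet_Icc hγ.continuous.continuousOn hinj
    MeasurableSet.univ, univ_inter]
  calc μH[1] (γ '' Icc a b) ≤ K * μH[1] (Icc a b) := by
        simpa using hγ.hausdorffMeasure_image_le zero_le_one (Icc a b)
    _ < ∞ := by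
        rw [hausdorffMeasure_real, Real.volume_Icc]
        exact ENNReal.mul_lt_top ENNReal.coe_lt_top ENNReal.ofReal_lt_top

end Pullback

section Curve

variable {E : Type*} [NormedAddCommGroup E] [NormedSpace ℝ E] [FiniteDimensional ℝ E]
  {γ : ℝ → E} {K : ℝ≥0}

theorem LipschitzWith.edist_le_lintegral_enorm_deriv (hγ : LipschitzWith K γ) {u v : ℝ}
    (huv : u ≤ v) : edist (γ u) (γ v) ≤ ∫⁻ t in Ioc u v, ‖deriv γ t‖ₑ := by
  -- A norming functional reduces this to the scalar FTC for absolutely continuous functions.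
  obtain ⟨ℓ, hℓ, hℓv⟩ := exists_dual_vector'' ℝ (γ v - γ u)
  have hφ : LipschitzWith (‖ℓ‖₊ * K) (ℓ ∘ γ) := ℓ.lipschitz.comp hγ
  have hFTC : ∫ t in u..v, deriv (ℓ ∘ γ) t = ℓ (γ v) - ℓ (γ u) :=
    (hφ.lipschitzOnWith (s := uIcc u v)).absolutelyContinuousOnInterval.integral_deriv_eq_sub
  have hderiv : ∀ᵐ t, ‖deriv (ℓ ∘ γ) t‖ₑ ≤ ‖deriv γ t‖ₑ := by
    filter_upwards [hγ.ae_differentiableAt_real] with t ht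
    rw [fderiv_comp_deriv t ℓ.differentiableAt ht, ℓ.fderiv]
    exact enorm_le_iff_norm_le.2 (ℓ.le_of_opNorm_le hℓ _ |>.trans_eq (one_mul _))
  calc edist (γ u) (γ v) = ‖∫ t in Ioc u v, deriv (ℓ ∘ γ) t‖ₑ := by
        rw [← intervalIntegral.integral_of_le huv, hFTC, ← map_sub, hℓv, RCLike.ofReal_real_eq_id,
          id, enorm_norm, edist_comm, edist_eq_enorm_sub]
    _ ≤ ∫⁻ t in Ioc u v, ‖deriv (ℓ ∘ γ) t‖ₑ := enorm_integral_le_lintegral_enorm _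
    _ ≤ ∫⁻ t in Ioc u v, ‖deriv γ t‖ₑ := lintegral_mono_ae (ae_restrict_of_ae hderiv)

theorem LipschitzWith.ediam_image_le_lintegral_enorm_deriv (hγ : LipschitzWith K γ) {s : Set ℝ}
    (hs : s.OrdConnected) : Metric.ediam (γ '' s) ≤ ∫⁻ t in s, ‖deriv γ t‖ₑ := by
  have key : ∀ u ∈ s, ∀ v ∈ s, u ≤ v → edist (γ u) (γ v) ≤ ∫⁻ t in s, ‖deriv γ t‖ₑ :=
    fun u hu v hv huv => (hγ.edist_le_lintegral_enorm_deriv huv).trans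
      (lintegral_mono_set (Ioc_subset_Icc_self.trans (hs.out hu hv)))
  refine Metric.ediam_image_le_iff.2 fun u hu v hv => ?_
  rcases le_total u v with huv | hvu
  · exact key u hu v hv huv
  · rw [edist_comm]; exact key v hv u hu hvu

variable [MeasurableSpace E] [BorelSpace E] {a b : ℝ}

theorem LipschitzWith.hausdorffMeasure_image_le_lintegral_enorm_deriv (hγ : LipschitzWith K γ)
    {s : Set ℝ} (hs : s.OrdConnected) : μH[1] (γ '' s) ≤ ∫⁻ t in s, ‖deriv γ t‖ₑ := by
  set piece : ℝ → ℤ → Set ℝ := fun h i => s ∩ Ioc (i * h) (((i + 1 : ℤ) : ℝ) * h)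
  have hcover : ∀ h : ℝ, 0 < h → ⋃ i, piece h i = s := fun h hh => by
    have := iUnion_Ioc_add_zsmul hh 0
    simp only [zero_add, zsmul_eq_mul] at this
    rw [← inter_iUnion, this, inter_univ]
  have hdisj : ∀ h : ℝ, Pairwise (Function.onFun Disjoint (piece h)) := fun h i j hij => by
    have := pairwise_disjoint_Ioc_add_zsmul (0 : ℝ) h hij
    simp only [Function.onFun, zero_add, zsmul_eq_mul] at this
    exact this.mono inter_subset_right inter_subset_right
  have hmeas : ∀ h i, MeasurableSet (piece h i) := fun h i =>
    (hs.inter ordConnected_Ioc).measurableSet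
  have hsum : ∀ h : ℝ, 0 < h → ∑' i, Metric.ediam (γ '' piece h i) ^ (1 : ℝ) ≤
      ∫⁻ t in s, ‖deriv γ t‖ₑ := fun h hh => by
    calc ∑' i, Metric.ediam (γ '' piece h i) ^ (1 : ℝ)
        ≤ ∑' i, ∫⁻ t in piece h i, ‖deriv γ t‖ₑ := by
          simp only [ENNReal.rpow_one]
          exact ENNReal.tsum_le_tsum fun i =>
            hγ.ediam_image_le_lintegral_enorm_deriv (hs.inter ordConnected_Ioc)
      _ = ∫⁻ t in s, ‖deriv γ t‖ₑ := by rw [← lintegral_iUnion (hmeas h) (hdisj h), hcover h hh]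
  have hdiam : ∀ h : ℝ, 0 < h → ∀ i, Metric.ediam (γ '' piece h i) ≤ K * ENNReal.ofReal h :=
    fun h hh i => by
    have : Metric.ediam (piece h i) ≤ ENNReal.ofReal h := by
      calc Metric.ediam (piece h i) ≤ Metric.ediam (Ioc ((i : ℝ) * h) (((i + 1 : ℤ) : ℝ) * h)) :=
            Metric.ediam_mono inter_subset_right
        _ = ENNReal.ofReal h := by rw [Real.ediam_Ioc]; push_cast; ring_nf
    exact (hγ.ediam_image_le _).trans (by gcongr)
  have hr : Tendsto (fun h : ℝ => (K : ℝ≥0∞) * ENNReal.ofReal h) (𝓝[>] 0) (𝓝 0) := by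
    have h0 : Tendsto ENNReal.ofReal (𝓝[>] 0) (𝓝 0) := by
      simpa using (ENNReal.continuous_ofReal.tendsto 0).mono_left nhdsWithin_le_nhds
    simpa using ENNReal.Tendsto.const_mul h0 (Or.inr ENNReal.coe_ne_top)
  refine (Measure.hausdorffMeasure_le_liminf_tsum 1 (γ '' s) _ hr (fun h i => γ '' piece h i)
    (eventually_nhdsWithin_of_forall (s := Ioi 0) hdiam) ?_).trans ?_
  · filter_upwards [self_mem_nhdsWithin] with h hh
    rw [← image_iUnion, hcover h hh]
  · exact liminf_le_of_frequently_le' (eventually_nhdsWithin_of_forall (s := Ioi 0) hsum).frequently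

theorem LipschitzWith.enorm_deriv_le_rnDeriv_hausdorffPullback (hγ : LipschitzWith K γ)
    (hinj : InjOn γ (Icc a b)) :
    ∀ᵐ x ∂volume.restrict (Ioo a b),
      ‖deriv γ x‖ₑ ≤ (hausdorffPullback γ (Icc a b)).rnDeriv volume x := by
  have := hγ.isFiniteMeasure_hausdorffPullback_Icc hinj
  rw [ae_restrict_iff' measurableSet_Ioo]
  filter_upwards [Besicovitch.ae_tendsto_rnDeriv (hausdorffPullback γ (Icc a b)) volume,
    hγ.ae_differentiableAt_real] with x hρ hd hx
  have hslope := (continuous_enorm.tendsto _).comp hd.hasDerivAt.tendsto_symmetric_slope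
  refine le_of_tendsto_of_tendsto hslope hρ ?_
  filter_upwards [Ioo_mem_nhdsGT (lt_min (sub_pos.2 hx.1) (sub_pos.2 hx.2))] with r hr
  have hball : Metric.closedBall x r = Icc (x - r) (x + r) := Real.closedBall_eq_Icc
  have hsub : Icc (x - r) (x + r) ⊆ Icc a b := Icc_subset_Icc
    (by linarith [hr.2.trans_le (min_le_left _ _)]) (by linarith [hr.2.trans_le (min_le_right _ _)])
  have hr2 : (0 : ℝ) < 2 * r := by linarith [hr.1]
  rw [Function.comp_apply, enorm_smul, enorm_inv hr2.ne', Real.enorm_of_nonneg hr2.le,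
    ← ENNReal.div_eq_inv_mul, Real.volume_closedBall,
    hausdorffPullback_apply measurableSet_Icc hγ.continuous.continuousOn hinj
      measurableSet_closedBall, hball, inter_eq_self_of_subset_left hsub, ← edist_eq_enorm_sub,
    edist_comm]
  gcongr
  exact edist_le_hausdorffMeasure_image_Icc hγ.continuous.continuousOn (by linarith)

theorem LipschitzWith.hausdorffPullback_Icc_eq_withDensity (hγ : LipschitzWith K γ)
    (hinj : InjOn γ (Icc a b)) :
    hausdorffPullback γ (Icc a b) = (volume.restrict (Icc a b)).withDensity (‖deriv γ ·‖ₑ) := by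
  set ν := hausdorffPullback γ (Icc a b)
  have := hγ.isFiniteMeasure_hausdorffPullback_Icc hinj
  have hdens : ∀ᵐ x ∂volume.restrict (Icc a b), ‖deriv γ x‖ₑ ≤ ν.rnDeriv volume x := by
    rw [← Measure.restrict_congr_set Ioo_ae_eq_Icc]
    exact hγ.enorm_deriv_le_rnDeriv_hausdorffPullback hinj
  have hle : (volume.restrict (Icc a b)).withDensity (‖deriv γ ·‖ₑ) ≤ ν := by
    refine Measure.le_intro fun B hB _ => ?_
    calc (volume.restrict (Icc a b)).withDensity (‖deriv γ ·‖ₑ) B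
        = ∫⁻ x in B, ‖deriv γ x‖ₑ ∂volume.restrict (Icc a b) := withDensity_apply _ hB
      _ ≤ ∫⁻ x in B, ν.rnDeriv volume x ∂volume.restrict (Icc a b) :=
          lintegral_mono_ae (ae_restrict_of_ae hdens)
      _ ≤ ∫⁻ x in B, ν.rnDeriv volume x :=
          lintegral_mono' (Measure.restrict_mono subset_rfl Measure.restrict_le_self) le_rfl
      _ ≤ ν B := Measure.setLIntegral_rnDeriv_le B
  have := isFiniteMeasure_of_le ν hle
  refine (Measure.eq_of_le_of_measure_univ_eq hle (le_antisymm (hle univ) ?_)).symm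
  rw [hausdorffPullback_apply measurableSet_Icc hγ.continuous.continuousOn hinj
    MeasurableSet.univ, univ_inter, withDensity_apply _ MeasurableSet.univ, Measure.restrict_univ]
  exact hγ.hausdorffMeasure_image_le_lintegral_enorm_deriv ordConnected_Icc

end Curve

/-- Area formula for injective Lipschitz curves: for Borel measurable nonnegative `f`,
`∫_{γ(A)} f dH^1 = ∫_A f(γ(t)) ‖γ'(t)‖ dt`. -/
theorem area_formula_injective {n : ℕ} (γ : ℝ → Euc n) (K : ℝ≥0)
    (hγ : LipschitzWith K γ) (hinj : InjOn γ (Icc (0:ℝ) 1))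
    (f : Euc n → ℝ≥0∞) (hf : Measurable f)
    (A : Set ℝ) (hA : MeasurableSet A) (hA1 : A ⊆ Icc (0:ℝ) 1) :
    ∫⁻ x in γ '' A, f x ∂μH[1] = ∫⁻ t in A, f (γ t) * ENNReal.ofReal ‖deriv γ t‖ := by
  have hγm : Measurable γ := hγ.continuous.measurable
  have hdens := hγ.hausdorffPullback_Icc_eq_withDensity hinj
  calc ∫⁻ x in γ '' A, f x ∂μH[1]
      = ∫⁻ x, f x ∂((hausdorffPullback γ (Icc 0 1)).restrict A).map γ := by
        rw [map_hausdorffPullback_restrict measurableSet_Icc hγ.continuous hinj hA hA1]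
    _ = ∫⁻ t in A, f (γ t) ∂(volume.restrict (Icc 0 1)).withDensity (‖deriv γ ·‖ₑ) := by
        rw [lintegral_map hf hγm, hdens]
    _ = ∫⁻ t in A, f (γ t) * ENNReal.ofReal ‖deriv γ t‖ := by
        rw [setLIntegral_withDensity_eq_setLIntegral_mul _ (measurable_deriv γ).enorm
          (g := fun t => f (γ t)) (hf.comp hγm) hA, Measure.restrict_restrict_of_subset hA1]
        simp only [Pi.mul_apply, mul_comm, ofReal_norm]
end
end

section
/- Let γ : [0,1] → ℝ^n be a Lipschitz path and A ⊂ [0,1] Lebesgue measurable with H^1(γ(A)) = 0. Then γ'(t) = 0 for Lebesgue-almost all t ∈ A. -/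
open MeasureTheory Set Filter Topology
open scoped ENNReal NNReal

noncomputable section

theorem AntilipschitzWith.le_hausdorffMeasure_image_of_domRestrict
    {X Y : Type*} [EMetricSpace X] [MeasurableSpace X] [BorelSpace X]
    [EMetricSpace Y] [MeasurableSpace Y] [BorelSpace Y]
    {f : X → Y} {s : Set X} {K : ℝ≥0} (hf : AntilipschitzWith K (s.domRestrict f))
    {d : ℝ} (hd : 0 ≤ d) :
    μH[d] s ≤ (K : ℝ≥0∞) ^ d * μH[d] (f '' s) := by
  have hs : μH[d] s = μH[d] (univ : Set s) := by
    rw [← (isometry_subtype_coe (s := s)).hausdorffMeasure_image (Or.inl hd), image_univ,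
      Subtype.range_coe]
  simpa only [hs, image_univ, range_domRestrict] using hf.le_hausdorffMeasure_image hd univ

theorem ContinuousLinearMap.antilipschitz_of_apply_one_ne_zero
    {𝕜 F : Type*} [NontriviallyNormedField 𝕜] [NormedAddCommGroup F] [NormedSpace 𝕜 F]
    (A : 𝕜 →L[𝕜] F) (hA : A 1 ≠ 0) : AntilipschitzWith ‖A 1‖₊⁻¹ A :=
  A.antilipschitz_of_bound fun x => by
    have hx : A x = x • A 1 := by rw [← map_smul, smul_eq_mul, mul_one]
    rw [hx, norm_smul, NNReal.coe_inv, coe_nnnorm, mul_comm ‖x‖,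
      inv_mul_cancel_left₀ (norm_ne_zero_iff.2 hA)]

theorem ApproximatesLinearOn.antilipschitzWith_domRestrict
    {𝕜 F : Type*} [NontriviallyNormedField 𝕜] [NormedAddCommGroup F] [NormedSpace 𝕜 F]
    {f : 𝕜 → F} {A : 𝕜 →L[𝕜] F} {s : Set 𝕜} {c : ℝ≥0}
    (hf : ApproximatesLinearOn f A s c) (hc : c < ‖A 1‖₊) :
    AntilipschitzWith (‖A 1‖₊ - c)⁻¹ (s.domRestrict f) := by
  have hA : A 1 ≠ 0 := nnnorm_pos.1 (c.2.trans_lt hc)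
  have := ((A.antilipschitz_of_apply_one_ne_zero hA).domRestrict s).add_lipschitzWith
    hf.lipschitz_sub (by rwa [inv_inv])
  simp only [inv_inv, domRestrict_apply, add_sub_cancel] at this
  exact this

theorem volume_eq_zero_of_hausdorffMeasure_image_eq_zero
    {F : Type*} [NormedAddCommGroup F] [NormedSpace ℝ F] [SecondCountableTopology F]
    [MeasurableSpace F] [BorelSpace F] {f f' : ℝ → F} {s : Set ℝ}
    (hf : ∀ x ∈ s, HasDerivWithinAt f (f' x) s x)
    (hf' : ∀ x ∈ s, f' x ≠ 0) (hs : μH[1] (f '' s) = 0) :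
    volume s = 0 := by
  rcases s.eq_empty_or_nonempty with rfl | hne
  · exact measure_empty
  classical
  obtain ⟨t, A, -, -, hst, hA, hAf'⟩ := exists_partition_approximatesLinearOn_of_hasFDerivWithinAt
    f s (fun x => (1 : ℝ →L[ℝ] ℝ).smulRight (f' x)) hf
    (fun B => if B 1 = 0 then 1 else ‖B 1‖₊ / 2) fun B => by split_ifs with h <;> simp [h]
  have hcover : s ⊆ ⋃ n, s ∩ t n := by
    rw [← inter_iUnion]
    exact subset_inter Subset.rfl hst
  refine measure_mono_null hcover (measure_iUnion_null fun n => ?_)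
  obtain ⟨y, hy, hAy⟩ := hAf' hne n
  have hAn : A n 1 = f' y := by simp [hAy]
  have happrox := hA n
  rw [hAn, if_neg (hf' y hy)] at happrox
  have hc : ‖f' y‖₊ / 2 < ‖A n 1‖₊ := by
    rw [hAn]
    exact half_lt_self (nnnorm_pos.2 (hf' y hy))
  rw [← hausdorffMeasure_real, ← nonpos_iff_eq_zero]
  calc μH[1] (s ∩ t n) ≤ _ * μH[1] (f '' (s ∩ t n)) :=
        (happrox.antilipschitzWith_domRestrict hc).le_hausdorffMeasure_image_of_domRestrict
          zero_le_one
    _ = 0 := by rw [measure_mono_null (image_mono inter_subset_left) hs, mul_zero]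

theorem deriv_eq_zero_of_null_image_general {n : ℕ} (γ : ℝ → Euc n) (K : ℝ≥0)
    (hγ : LipschitzWith K γ) (A : Set ℝ)
    (h0 : μH[1] (γ '' A) = 0) :
    ∀ᵐ t ∂(volume.restrict A), deriv γ t = 0 := by
  rw [ae_restrict_iff (measurableSet_eq_fun (measurable_deriv γ) measurable_const), ae_iff]
  set s := {t ∈ A | DifferentiableAt ℝ γ t ∧ deriv γ t ≠ 0}
  have hs : volume s = 0 :=
    volume_eq_zero_of_hausdorffMeasure_image_eq_zero
      (fun t ht => ht.2.1.hasDerivAt.hasDerivWithinAt) (fun t ht => ht.2.2)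
      (measure_mono_null (image_mono (sep_subset _ _)) h0)
  have hdiff : volume {t | ¬DifferentiableAt ℝ γ t} = 0 := ae_iff.1 hγ.ae_differentiableAt
  refine measure_mono_null (fun t ht => ?_) (measure_union_null hs hdiff)
  obtain ⟨htA, ht⟩ := Classical.not_imp.1 ht
  by_cases hd : DifferentiableAt ℝ γ t
  · exact Or.inl ⟨htA, hd, ht⟩
  · exact Or.inr hd

/-- If `H^1(γ(A)) = 0` for a Lipschitz path `γ` and measurable `A ⊆ [0,1]`,
then `γ' = 0` almost everywhere on `A`. -/
theorem deriv_eq_zero_of_null_image {n : ℕ} (γ : ℝ → Euc n) (K : ℝ≥0)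
    (hγ : LipschitzWith K γ) (A : Set ℝ) (hA : MeasurableSet A) (hA1 : A ⊆ Icc (0:ℝ) 1)
    (h0 : μH[1] (γ '' A) = 0) :
    ∀ᵐ t ∂(volume.restrict A), deriv γ t = 0 :=
  deriv_eq_zero_of_null_image_general γ K hγ A h0
end
end

section
/- Let S ⊂ [-1,1]^n be countably 1-rectifiable and Borel measurable, a = ∞, and b : ℝ^n → [0,∞] lower semi-continuous on S with b = ∞ outside S. Define L(γ) = ∫_{γ^{-1}(S)} b(γ)|γ'| dt (with L(γ) = ∞ if γ positively traverses the complement of S). If γ_j is a sequence of Lipschitz paths with L(γ_j) uniformly bounded, then for each δ > 0 there exists λ ∈ [0,∞) such that H^1(γ_j([0,1]) \ S_λ) ≤ δ for all j, where S_λ = {z ∈ S : b(z) ≤ λ}. -/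
/-!
Let `E ⊆ [0,1]` be the set of times at which `γ` lies outside `S_λ`. Since `b = ∞` off `S`, the
friction along `γ` is at least `λ` on `E`, so `λ ∫_E |γ'| ≤ L(γ) ≤ M`. The one-dimensional area
inequality `H¹(γ(E)) ≤ ∫_E |γ'|` then bounds `H¹(γ([0,1]) \ S_λ)` by `M / λ`, uniformly in `j`.

The area inequality is proved by sorting the points of differentiability according to the value
of `⌊|γ'| / ε⌋` and covering each level set by countably many pieces on which `γ` is `ε`-close to
a linear map, hence Lipschitz with a constant at most `|γ'| + 2ε`.
-/

open MeasureTheory Set Filter Topology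
open scoped ENNReal NNReal

noncomputable section

/-- A set is countably `1`-rectifiable if it is a countable union of Lipschitz images of
bounded subsets of `ℝ`. -/
def Countably1Rectifiable {n : ℕ} (S : Set (Euc n)) : Prop :=
  ∃ (f : ℕ → ℝ → Euc n) (A : ℕ → Set ℝ),
    (∀ i, ∃ K : ℝ≥0, LipschitzOnWith K (f i) (A i)) ∧
    (∀ i, Bornology.IsBounded (A i)) ∧ S = ⋃ i, (f i) '' (A i)

/-- The cost of travelling along a Lipschitz path, for the friction coefficient `bext`
(already extended by the off-network cost outside the network). -/
def pathCost {n : ℕ} (bext : Euc n → ℝ≥0∞) (γ : ℝ → Euc n) : ℝ≥0∞ :=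
  ∫⁻ t in Icc (0:ℝ) 1, bext (γ t) * ENNReal.ofReal ‖deriv γ t‖

section HausdorffImage

variable {F : Type*} [NormedAddCommGroup F] [NormedSpace ℝ F] [MeasurableSpace F] [BorelSpace F]

theorem hausdorffMeasure_image_le_of_nnnorm_fderivWithin_le [SecondCountableTopology F]
    {f : ℝ → F} {f' : ℝ → ℝ →L[ℝ] F} {s : Set ℝ} {c : ℝ≥0}
    (hf' : ∀ x ∈ s, HasFDerivWithinAt f (f' x) s x) (hc : ∀ x ∈ s, ‖f' x‖₊ ≤ c)
    {ε : ℝ≥0} (hε : 0 < ε) :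
    μH[1] (f '' s) ≤ (c + ε) * volume s := by
  rcases s.eq_empty_or_nonempty with rfl | hs
  · simp
  obtain ⟨t, A, t_disj, t_meas, t_cover, hA, hA_eq⟩ :=
    exists_partition_approximatesLinearOn_of_hasFDerivWithinAt f s f' hf' (fun _ ↦ ε)
      fun _ ↦ hε.ne'
  have hA_le : ∀ n, ‖A n‖₊ ≤ c := fun n ↦ by
    obtain ⟨y, hy, hAy⟩ := hA_eq hs n
    exact hAy ▸ hc y hy
  calc μH[1] (f '' s) ≤ μH[1] (⋃ n, f '' (s ∩ t n)) := by
        rw [← image_iUnion, ← inter_iUnion]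
        exact measure_mono (image_mono (subset_inter subset_rfl t_cover))
    _ ≤ ∑' n, μH[1] (f '' (s ∩ t n)) := measure_iUnion_le _
    _ ≤ ∑' n, (c + ε) * volume.restrict s (t n) := by
        gcongr with n
        calc μH[1] (f '' (s ∩ t n)) ≤ (‖A n‖₊ + ε : ℝ≥0) * μH[1] (s ∩ t n) := by
              simpa using (lipschitzOnWith_iff_restrict.2 (hA n).lipschitz)
                |>.hausdorffMeasure_image_le zero_le_one
          _ ≤ (c + ε) * volume.restrict s (t n) := by
              rw [hausdorffMeasure_real, Measure.restrict_apply (t_meas n), inter_comm]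
              push_cast
              gcongr
              exact_mod_cast hA_le n
    _ = (c + ε) * volume.restrict s (⋃ n, t n) := by
        rw [ENNReal.tsum_mul_left, measure_iUnion t_disj t_meas]
    _ ≤ (c + ε) * volume s :=
        mul_le_mul_right ((measure_mono (subset_univ _)).trans_eq (Measure.restrict_apply_univ s)) _

theorem hausdorffMeasure_image_le_setLIntegral_enorm_deriv_add [SecondCountableTopology F]
    [CompleteSpace F] {f : ℝ → F} {s : Set ℝ}
    (hf : ∀ x ∈ s, DifferentiableAt ℝ f x) {ε : ℝ≥0} (hε : 0 < ε) :
    μH[1] (f '' s) ≤ ∫⁻ x in s, (‖deriv f x‖ₑ + 2 * ε) := by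
  set level : ℝ → ℕ := fun x ↦ ⌊‖deriv f x‖₊ / ε⌋₊
  have level_meas : Measurable level :=
    ((measurable_deriv f).nnnorm.div_const ε).nat_floor
  have mem_level :
      ∀ k, ∀ x ∈ level ⁻¹' {k}, k * ε ≤ ‖deriv f x‖₊ ∧ ‖deriv f x‖₊ < (k + 1) * ε := by
    intro k x hx
    have hx : ⌊‖deriv f x‖₊ / ε⌋₊ = k := hx
    constructor
    · rw [← le_div_iff₀ hε, ← hx]; exact Nat.floor_le (by positivity)
    · rw [← div_lt_iff₀ hε, ← hx]; exact Nat.lt_floor_add_one _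
  calc μH[1] (f '' s) = μH[1] (⋃ k, f '' (level ⁻¹' {k} ∩ s)) := by
        rw [← image_iUnion, ← iUnion_inter, ← preimage_iUnion, iUnion_of_singleton,
          preimage_univ, univ_inter]
    _ ≤ ∑' k, μH[1] (f '' (level ⁻¹' {k} ∩ s)) := measure_iUnion_le _
    _ ≤ ∑' k : ℕ, ∫⁻ x in level ⁻¹' {k}, (‖deriv f x‖ₑ + 2 * ε) ∂volume.restrict s := by
        gcongr with k
        have hk := mem_level k
        calc μH[1] (f '' (level ⁻¹' {k} ∩ s))
            ≤ ((k + 1) * ε + ε) * volume (level ⁻¹' {k} ∩ s) :=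
              hausdorffMeasure_image_le_of_nnnorm_fderivWithin_le (c := (k + 1) * ε)
                (fun x hx ↦ (hf x hx.2).hasFDerivAt.hasFDerivWithinAt)
                (fun x hx ↦ (NNReal.eq norm_deriv_eq_norm_fderiv).symm.trans_le (hk x hx.1).2.le)
                hε
          _ = ∫⁻ x in level ⁻¹' {k}, ((k + 1) * ε + ε : ℝ≥0) ∂volume.restrict s := by
              rw [setLIntegral_const,
                Measure.restrict_apply (level_meas (measurableSet_singleton k))]
              push_cast; rfl
          _ ≤ ∫⁻ x in level ⁻¹' {k}, (‖deriv f x‖ₑ + 2 * ε) ∂volume.restrict s := by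
              refine setLIntegral_mono (by fun_prop) fun x hx ↦ ?_
              rw [enorm_eq_nnnorm, ← ENNReal.coe_ofNat, ← ENNReal.coe_mul, ← ENNReal.coe_add,
                ENNReal.coe_le_coe]
              calc (k + 1) * ε + ε = k * ε + 2 * ε := by ring
                _ ≤ ‖deriv f x‖₊ + 2 * ε := by gcongr; exact (hk x hx).1
    _ = ∫⁻ x in s, (‖deriv f x‖ₑ + 2 * ε) := by
        rw [← lintegral_iUnion (fun k ↦ level_meas (measurableSet_singleton k))
          (pairwise_disjoint_fiber level), ← preimage_iUnion, iUnion_of_singleton, preimage_univ,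
          Measure.restrict_univ]

theorem LipschitzWith.hausdorffMeasure_image_le_setLIntegral_enorm_deriv [FiniteDimensional ℝ F]
    {f : ℝ → F} {K : ℝ≥0} (hf : LipschitzWith K f) {s : Set ℝ} (hs : volume s ≠ ∞) :
    μH[1] (f '' s) ≤ ∫⁻ x in s, ‖deriv f x‖ₑ := by
  set D := {x | DifferentiableAt ℝ f x}
  have image_null : μH[1] (f '' (s \ D)) = 0 := by
    have hnull : volume (s \ D) = 0 :=
      measure_mono_null (fun x hx ↦ hx.2) (ae_iff.1 hf.ae_differentiableAt)
    simpa [hausdorffMeasure_real, hnull] using hf.hausdorffMeasure_image_le zero_le_one (s \ D)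
  have image_le : μH[1] (f '' s) ≤ μH[1] (f '' (s ∩ D)) := by
    calc μH[1] (f '' s) = μH[1] (f '' (s ∩ D) ∪ f '' (s \ D)) := by
          rw [← image_union, inter_union_sdiff]
      _ ≤ μH[1] (f '' (s ∩ D)) + μH[1] (f '' (s \ D)) := measure_union_le _ _
      _ = μH[1] (f '' (s ∩ D)) := by rw [image_null, add_zero]
  refine ENNReal.le_of_forall_pos_le_add fun η hη _ ↦ ?_
  obtain ⟨ε, hε, hεη⟩ := ENNReal.exists_nnreal_pos_mul_lt (b := η)
    (ENNReal.mul_ne_top (ENNReal.ofNat_ne_top (n := 2)) hs) (ENNReal.coe_ne_zero.2 hη.ne')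
  calc μH[1] (f '' s) ≤ ∫⁻ x in s ∩ D, (‖deriv f x‖ₑ + 2 * ε) :=
        image_le.trans (hausdorffMeasure_image_le_setLIntegral_enorm_deriv_add (fun x hx ↦ hx.2) hε)
    _ ≤ ∫⁻ x in s, (‖deriv f x‖ₑ + 2 * ε) := lintegral_mono_set inter_subset_left
    _ = (∫⁻ x in s, ‖deriv f x‖ₑ) + ε * (2 * volume s) := by
        rw [lintegral_add_right _ measurable_const, setLIntegral_const, mul_comm (2 : ℝ≥0∞),
          mul_assoc]
    _ ≤ (∫⁻ x in s, ‖deriv f x‖ₑ) + η := by gcongr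

end HausdorffImage

theorem LowerSemicontinuousOn.measurableSet_inter_preimage_Iic {α β : Type*}
    [TopologicalSpace α] [MeasurableSpace α] [OpensMeasurableSpace α]
    [TopologicalSpace β] [LinearOrder β] {f : α → β} {s : Set α}
    (hf : LowerSemicontinuousOn f s) (hs : MeasurableSet s) (y : β) :
    MeasurableSet (s ∩ f ⁻¹' Iic y) := by
  obtain ⟨v, hv, hsv⟩ := lowerSemicontinuousOn_iff_preimage_Iic.1 hf y
  exact hsv ▸ hs.inter hv.measurableSet

theorem const_mul_setLIntegral_le_pathCost {n : ℕ} {b : Euc n → ℝ≥0∞} {γ : ℝ → Euc n}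
    {E : Set ℝ} (hE : MeasurableSet E) (hE01 : E ⊆ Icc 0 1) {lam : ℝ≥0∞}
    (hlam : ∀ t ∈ E, lam ≤ b (γ t)) :
    lam * ∫⁻ t in E, ‖deriv γ t‖ₑ ≤ pathCost b γ := by
  calc lam * ∫⁻ t in E, ‖deriv γ t‖ₑ = ∫⁻ t in E, lam * ‖deriv γ t‖ₑ :=
        (lintegral_const_mul lam (measurable_deriv γ).enorm).symm
    _ ≤ ∫⁻ t in E, b (γ t) * ENNReal.ofReal ‖deriv γ t‖ := by
        refine setLIntegral_mono' hE fun t ht ↦ ?_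
        rw [ofReal_norm]
        gcongr
        exact hlam t ht
    _ ≤ pathCost b γ := lintegral_mono_set hE01

theorem ENNReal.exists_ne_top_div_le {M δ : ℝ≥0∞} (hM : M ≠ ∞) (hδ : 0 < δ) :
    ∃ lam : ℝ≥0∞, lam ≠ 0 ∧ lam ≠ ∞ ∧ M / lam ≤ δ := by
  set η := min δ 1
  have hη0 : η ≠ 0 := (lt_min hδ one_pos).ne'
  have hηtop : η ≠ ∞ := ne_top_of_le_ne_top one_ne_top (min_le_right _ _)
  refine ⟨M / η + 1, by simp, add_ne_top.2 ⟨div_ne_top hM hη0, one_ne_top⟩, ?_⟩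
  refine (ENNReal.div_le_of_le_mul ?_).trans (min_le_left δ 1)
  rw [mul_add, mul_one, ENNReal.mul_div_cancel hη0 hηtop]
  exact le_self_add

theorem curves_intersect_network_general {n : ℕ} (S : Set (Euc n))
    (hSmeas : MeasurableSet S)
    (b : Euc n → ℝ≥0∞) (hlsc : LowerSemicontinuousOn b S) (hbout : ∀ z ∉ S, b z = ⊤)
    (γ : ℕ → ℝ → Euc n) (K : ℕ → ℝ≥0) (hlip : ∀ j, LipschitzWith (K j) (γ j))
    (M : ℝ≥0∞) (hM : M ≠ ⊤) (hbound : ∀ j, pathCost b (γ j) ≤ M)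
    (δ : ℝ≥0∞) (hδ : 0 < δ) :
    ∃ lam : ℝ≥0∞, lam ≠ ⊤ ∧
      ∀ j, μH[1] ((γ j '' Icc (0:ℝ) 1) \ {z ∈ S | b z ≤ lam}) ≤ δ := by
  obtain ⟨lam, hlam0, hlamtop, hMlam⟩ := ENNReal.exists_ne_top_div_le hM hδ
  refine ⟨lam, hlamtop, fun j ↦ ?_⟩
  set E := Icc (0:ℝ) 1 ∩ γ j ⁻¹' {z ∈ S | b z ≤ lam}ᶜ
  have hE : MeasurableSet E := measurableSet_Icc.inter <| (hlip j).continuous.measurable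
    (hlsc.measurableSet_inter_preimage_Iic hSmeas lam).compl
  have hlamE : ∀ t ∈ E, lam ≤ b (γ j t) := fun t ht ↦ by
    by_cases hS : γ j t ∈ S
    · exact (not_le.1 fun hb ↦ ht.2 ⟨hS, hb⟩).le
    · simp [hbout _ hS]
  have hcost : lam * ∫⁻ t in E, ‖deriv (γ j) t‖ₑ ≤ M :=
    (const_mul_setLIntegral_le_pathCost hE inter_subset_left hlamE).trans (hbound j)
  calc μH[1] ((γ j '' Icc (0:ℝ) 1) \ {z ∈ S | b z ≤ lam}) ≤ μH[1] (γ j '' E) := by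
        refine measure_mono ?_
        rintro _ ⟨⟨t, ht, rfl⟩, hz⟩
        exact ⟨t, ⟨ht, hz⟩, rfl⟩
    _ ≤ ∫⁻ t in E, ‖deriv (γ j) t‖ₑ :=
        (hlip j).hausdorffMeasure_image_le_setLIntegral_enorm_deriv <|
          ne_top_of_le_ne_top (by simp) (measure_mono inter_subset_left)
    _ ≤ M / lam := (ENNReal.le_div_iff_mul_le (.inl hlam0) (.inl hlamtop)).2 (by rwa [mul_comm])
    _ ≤ δ := hMlam

/-- If `a = ∞` (friction `∞` off the network `S`) and the path costs `L(γ_j)` are uniformly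
bounded, then for each `δ > 0` there is `λ < ∞` with `H^1(γ_j([0,1]) \ S_λ) ≤ δ` for all `j`. -/
theorem curves_intersect_network {n : ℕ} (S : Set (Euc n))
    (hSrect : Countably1Rectifiable S) (hSmeas : MeasurableSet S)
    (b : Euc n → ℝ≥0∞) (hlsc : LowerSemicontinuousOn b S) (hbout : ∀ z ∉ S, b z = ⊤)
    (γ : ℕ → ℝ → Euc n) (K : ℕ → ℝ≥0) (hlip : ∀ j, LipschitzWith (K j) (γ j))
    (hcube : ∀ j, ∀ t ∈ Icc (0:ℝ) 1, γ j t ∈ cube n)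
    (M : ℝ≥0∞) (hM : M ≠ ⊤) (hbound : ∀ j, pathCost b (γ j) ≤ M)
    (δ : ℝ≥0∞) (hδ : 0 < δ) :
    ∃ lam : ℝ≥0∞, lam ≠ ⊤ ∧
      ∀ j, μH[1] ((γ j '' Icc (0:ℝ) 1) \ {z ∈ S | b z ≤ lam}) ≤ δ :=
  curves_intersect_network_general S hSmeas b hlsc hbout γ K hlip M hM hbound δ hδ
end
end

section
/- Let S ⊂ [-1,1]^n be countably 1-rectifiable and Borel measurable with H^1(S_λ) < ∞ for all λ < ∞, where S_λ = {z ∈ S : b(z) ≤ λ}, let a = ∞ and b : S → [0,∞) be lower semi-continuous. Let γ_j be C-Lipschitz paths with uniformly bounded cost L(γ_j) = ∫_{γ_j^{-1}(S)} b(γ_j)|γ_j'| dt + ∞·H^1-length outside S, converging uniformly to γ. Then H^1(γ([0,1]) \ S) = 0, and moreover for each δ > 0 there exists λ < ∞ with H^1(γ([0,1]) \ S_λ) ≤ δ. -/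
open MeasureTheory Set Filter Topology
open scoped ENNReal NNReal

noncomputable section

/-!
On `γⱼ⁻¹(ℝⁿ \ S_λ)` the cost density is at least `λ‖γⱼ'‖`, so the area inequality
`H¹(γ(B)) ≤ ∫_B ‖γ'‖` bounds `H¹(γⱼ([0,1]) \ S_λ)` by `M / λ`. A Gołąb-type semicontinuity
carries this to the limit curve up to a factor `16`: near a point `a` of `γ([0,1])` the curves `γⱼ`
pass close to `a` and then leave a small ball `B(a, r)`, so they have length at least `r / 2` in
it, and a Vitali covering turns this lower density into an upper bound for `H¹(γ([0,1]) ∩ U)` on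
open sets `U`. Since `H¹(S_λ) < ∞`, `S_λ` is approximated from inside by closed sets, which gives
`H¹(γ([0,1]) \ S_λ) ≤ 16 M / λ`; letting `λ → ∞` yields both claims.
-/

open Metric Function TopologicalSpace

section AreaInequality

variable {F : Type*} [NormedAddCommGroup F] [NormedSpace ℝ F] [MeasurableSpace F] [BorelSpace F]

theorem hausdorffMeasure_image_le_of_hasDerivWithinAt [SecondCountableTopology F]
    {f f' : ℝ → F} {s : Set ℝ} (hf : ∀ x ∈ s, HasDerivWithinAt f (f' x) s x) {c c' : ℝ≥0}
    (hc : ∀ x ∈ s, ‖f' x‖₊ ≤ c) (hcc' : c < c') : μH[1] (f '' s) ≤ c' * volume s := by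
  rcases s.eq_empty_or_nonempty with rfl | hs
  · simp
  obtain ⟨t, A, ht_disj, ht_meas, hst, hA_approx, hA_deriv⟩ :=
    exists_partition_approximatesLinearOn_of_hasFDerivWithinAt f s
      (fun x => (1 : ℝ →L[ℝ] ℝ).smulRight (f' x)) hf (fun _ => c' - c)
      (fun _ => (tsub_pos_of_lt hcc').ne')
  have hlip : ∀ n, LipschitzOnWith c' f (s ∩ t n) := fun n => by
    obtain ⟨y, hy, hAy⟩ := hA_deriv hs n
    have hAn : ‖A n‖₊ ≤ c := by
      rw [hAy, ← NNReal.coe_le_coe, coe_nnnorm, ContinuousLinearMap.norm_smulRight_apply]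
      simpa using NNReal.coe_le_coe.2 (hc y hy)
    refine (lipschitzOnWith_iff_restrict.2 (hA_approx n).lipschitz).weaken ?_
    calc ‖A n‖₊ + (c' - c) ≤ c + (c' - c) := by gcongr
      _ = c' := add_tsub_cancel_of_le hcc'.le
  calc μH[1] (f '' s) ≤ ∑' n, μH[1] (f '' (s ∩ t n)) := by
        refine (measure_mono ?_).trans (measure_iUnion_le _)
        rw [← image_iUnion, ← inter_iUnion, inter_eq_self_of_subset_left hst]
    _ ≤ ∑' n, c' * volume.restrict s (t n) := ENNReal.tsum_le_tsum fun n => by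
        rw [Measure.restrict_apply (ht_meas n), inter_comm (t n)]
        simpa [hausdorffMeasure_real] using (hlip n).hausdorffMeasure_image_le zero_le_one
    _ ≤ c' * volume s := by
        rw [ENNReal.tsum_mul_left]
        gcongr
        simpa using tsum_measure_le_measure_univ (μ := volume.restrict s)
          (fun n => (ht_meas n).nullMeasurableSet) (ht_disj.mono fun _ _ h => h.aedisjoint)

theorem hausdorffMeasure_image_le_setLIntegral_add [FiniteDimensional ℝ F] {f : ℝ → F}
    {s : Set ℝ} (hf : ∀ x ∈ s, DifferentiableAt ℝ f x) {a ε : ℝ≥0} (hε : 0 < ε)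
    (hs : ∀ x ∈ s, ‖deriv f x‖₊ ∈ Icc a (a + ε)) :
    μH[1] (f '' s) ≤ ∫⁻ x in s, ‖deriv f x‖ₑ + 2 * ε := by
  calc μH[1] (f '' s) ≤ (a + 2 * ε : ℝ≥0) * volume s :=
        hausdorffMeasure_image_le_of_hasDerivWithinAt
          (fun x hx => (hf x hx).hasDerivAt.hasDerivWithinAt) (fun x hx => (hs x hx).2)
          (by rw [two_mul, ← add_assoc]; exact lt_add_of_pos_right _ hε)
    _ = ∫⁻ _ in s, (a : ℝ≥0∞) + 2 * ε := by
        rw [setLIntegral_const]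
        push_cast
        ring
    _ ≤ ∫⁻ x in s, ‖deriv f x‖ₑ + 2 * ε :=
        setLIntegral_mono ((measurable_deriv f).enorm.add_const _) fun x hx => by
          gcongr
          exact_mod_cast (hs x hx).1

theorem LipschitzWith.hausdorffMeasure_image_le_lintegral_add [FiniteDimensional ℝ F]
    {f : ℝ → F} {K : ℝ≥0} (hf : LipschitzWith K f) (s : Set ℝ) {ε : ℝ≥0}
    (hε : 0 < ε) :
    μH[1] (f '' s) ≤ (∫⁻ t in s, ‖deriv f t‖ₑ) + 2 * ε * volume s := by
  set D := {t | DifferentiableAt ℝ f t}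
  set level : ℝ → ℕ := fun t => ⌊‖deriv f t‖₊ / ε⌋₊
  set P : ℕ → Set ℝ := fun m => D ∩ level ⁻¹' {m}
  have hP_meas : ∀ m, MeasurableSet (P m) := fun m =>
    (measurableSet_of_differentiableAt ℝ f).inter
      (((measurable_deriv f).nnnorm.div_const ε).nat_floor (measurableSet_singleton m))
  have hP_disj : Pairwise (Disjoint on P) := fun m m' hmm' =>
    Disjoint.mono inter_subset_right inter_subset_right
      ((disjoint_singleton.2 hmm').preimage level)
  have hnull : μH[1] (f '' (s \ D)) = 0 := by
    refine measure_mono_null (image_mono (sdiff_subset_compl s D)) ?_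
    have hD : volume Dᶜ = 0 := ae_iff.1 hf.ae_differentiableAt_real
    simpa [hausdorffMeasure_real, hD] using hf.hausdorffMeasure_image_le zero_le_one Dᶜ
  have hpiece : ∀ m, μH[1] (f '' (s ∩ P m)) ≤ ∫⁻ t in s ∩ P m, ‖deriv f t‖ₑ + 2 * ε := by
    refine fun m =>
      hausdorffMeasure_image_le_setLIntegral_add (a := m * ε) (fun t ht => ht.2.1) hε ?_
    rintro t ⟨-, -, ht⟩
    have ht : ⌊‖deriv f t‖₊ / ε⌋₊ = m := ht
    constructor
    · rw [← le_div_iff₀ hε, ← ht]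
      exact Nat.floor_le zero_le
    · rw [← add_one_mul, ← div_le_iff₀ hε, ← ht]
      exact (Nat.lt_floor_add_one _).le
  have hcover : f '' s ⊆ f '' (s \ D) ∪ ⋃ m, f '' (s ∩ P m) := by
    rintro _ ⟨t, hts, rfl⟩
    by_cases htD : t ∈ D
    · exact Or.inr (mem_iUnion.2 ⟨level t, t, ⟨hts, htD, rfl⟩, rfl⟩)
    · exact Or.inl ⟨t, ⟨hts, htD⟩, rfl⟩
  calc μH[1] (f '' s) ≤ μH[1] (f '' (s \ D)) + ∑' m, μH[1] (f '' (s ∩ P m)) :=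
        (measure_mono hcover).trans <|
          (measure_union_le _ _).trans (by gcongr; exact measure_iUnion_le _)
    _ ≤ ∑' m, ∫⁻ t in P m, ‖deriv f t‖ₑ + 2 * ε ∂volume.restrict s := by
        rw [hnull, zero_add]
        refine ENNReal.tsum_le_tsum fun m => ?_
        rw [Measure.restrict_restrict (hP_meas m), inter_comm (P m)]
        exact hpiece m
    _ ≤ ∫⁻ t in s, ‖deriv f t‖ₑ + 2 * ε := by
        rw [← lintegral_iUnion hP_meas hP_disj]
        exact setLIntegral_le_lintegral _ _
    _ = (∫⁻ t in s, ‖deriv f t‖ₑ) + 2 * ε * volume s := by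
        rw [lintegral_add_right _ measurable_const, setLIntegral_const, mul_comm]

theorem LipschitzWith.hausdorffMeasure_image_le_lintegral [FiniteDimensional ℝ F]
    {f : ℝ → F} {K : ℝ≥0} (hf : LipschitzWith K f) {s : Set ℝ} (hs : volume s ≠ ⊤) :
    μH[1] (f '' s) ≤ ∫⁻ t in s, ‖deriv f t‖ₑ := by
  refine ENNReal.le_of_forall_pos_le_add fun δ hδ _ => ?_
  obtain ⟨ε, hε, hεs⟩ := ENNReal.exists_nnreal_pos_mul_lt (a := 2 * volume s) (b := δ)
    (ENNReal.mul_ne_top ENNReal.ofNat_ne_top hs) (by positivity)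
  calc μH[1] (f '' s) ≤ (∫⁻ t in s, ‖deriv f t‖ₑ) + ε * (2 * volume s) := by
        rw [← mul_assoc, mul_comm (ε : ℝ≥0∞)]
        exact hf.hausdorffMeasure_image_le_lintegral_add s hε
    _ ≤ (∫⁻ t in s, ‖deriv f t‖ₑ) + δ := by gcongr

end AreaInequality

theorem mul_hausdorffMeasure_image_diff_le_pathCost {n : ℕ} {b : Euc n → ℝ≥0∞}
    {γ : ℝ → Euc n} {C : ℝ≥0} (hγ : LipschitzWith C γ) {T : Set (Euc n)}
    (hT : MeasurableSet T) {lam : ℝ≥0∞} (hlam : ∀ z ∉ T, lam ≤ b z) :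
    lam * μH[1] (γ '' Icc 0 1 \ T) ≤ pathCost b γ := by
  set A := Icc (0 : ℝ) 1 ∩ γ ⁻¹' Tᶜ
  have hA : MeasurableSet A := measurableSet_Icc.inter (hγ.continuous.measurable hT.compl)
  have himage : γ '' Icc 0 1 \ T ⊆ γ '' A := by
    rintro _ ⟨⟨t, ht, rfl⟩, hγt⟩
    exact ⟨t, ⟨ht, hγt⟩, rfl⟩
  have hA_fin : volume A ≠ ⊤ :=
    ne_top_of_le_ne_top (by simp) (measure_mono (inter_subset_left : A ⊆ Icc 0 1))
  calc lam * μH[1] (γ '' Icc 0 1 \ T) ≤ lam * ∫⁻ t in A, ‖deriv γ t‖ₑ := by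
        gcongr
        exact (measure_mono himage).trans (hγ.hausdorffMeasure_image_le_lintegral hA_fin)
    _ = ∫⁻ t in A, lam * ‖deriv γ t‖ₑ :=
        (lintegral_const_mul lam (measurable_deriv γ).enorm).symm
    _ ≤ ∫⁻ t in A, b (γ t) * ENNReal.ofReal ‖deriv γ t‖ :=
        setLIntegral_mono' hA fun t ht => by
          rw [ofReal_norm]
          exact mul_le_mul_left (hlam _ ht.2) _
    _ ≤ pathCost b γ := lintegral_mono_set inter_subset_left

theorem LowerSemicontinuousOn.measurableSet_sep_le {X : Type*} [TopologicalSpace X]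
    [MeasurableSpace X] [OpensMeasurableSpace X] {S : Set X} {b : X → ℝ≥0∞}
    (hb : LowerSemicontinuousOn b S) (hS : MeasurableSet S) (lam : ℝ≥0∞) :
    MeasurableSet {z ∈ S | b z ≤ lam} := by
  obtain ⟨v, hv, hSv⟩ := lowerSemicontinuousOn_iff_preimage_Iic.1 hb lam
  change MeasurableSet (S ∩ b ⁻¹' Iic lam)
  rw [hSv]
  exact hS.inter hv.measurableSet

section Golab

variable {X : Type*} [MetricSpace X] [MeasurableSpace X] [BorelSpace X] {ι : Type*} {l : Filter ι}
  {I : Set ℝ} [I.OrdConnected] {γ : ι → ℝ → X} {g : ℝ → X}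

theorem ofReal_sub_le_hausdorffMeasure_image_inter_closedBall {f : ℝ → X} {t₁ t₂ : ℝ}
    (hf : ContinuousOn f (uIcc t₁ t₂)) {x : X} {ρ r : ℝ} (h₁ : dist (f t₁) x ≤ ρ)
    (h₂ : r ≤ dist (f t₂) x) :
    ENNReal.ofReal (r - ρ) ≤ μH[1] (f '' uIcc t₁ t₂ ∩ closedBall x r) := by
  have hsub : Icc ρ r ⊆ (dist · x) '' (f '' uIcc t₁ t₂ ∩ closedBall x r) := by
    intro c hc
    obtain ⟨u, hu, hux⟩ := intermediate_value_uIcc (f := (dist · x) ∘ f)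
      ((continuous_id.dist continuous_const).comp_continuousOn hf)
      (mem_uIcc_of_le (h₁.trans hc.1) (hc.2.trans h₂))
    exact ⟨f u, ⟨mem_image_of_mem f hu, mem_closedBall.2 (hux.trans_le hc.2)⟩, hux⟩
  calc ENNReal.ofReal (r - ρ) = μH[1] (Icc ρ r) := by rw [hausdorffMeasure_real, Real.volume_Icc]
    _ ≤ μH[1] ((dist · x) '' (f '' uIcc t₁ t₂ ∩ closedBall x r)) := measure_mono hsub
    _ ≤ μH[1] (f '' uIcc t₁ t₂ ∩ closedBall x r) := by
        simpa using (LipschitzWith.dist_left x).hausdorffMeasure_image_le zero_le_one _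

theorem eventually_ofReal_half_le_hausdorffMeasure_image_inter_closedBall
    (hγ : ∀ j, ContinuousOn (γ j) I) (hg : ∀ t ∈ I, Tendsto (γ · t) l (𝓝 (g t)))
    {t₁ t₂ : ℝ} (ht₁ : t₁ ∈ I) (ht₂ : t₂ ∈ I) {r : ℝ} (hr : 0 < r) (hr' : r < dist (g t₂) (g t₁)) :
    ∀ᶠ j in l, ENNReal.ofReal (r / 2) ≤ μH[1] (γ j '' I ∩ closedBall (g t₁) r) := by
  have h₁ : ∀ᶠ j in l, dist (γ j t₁) (g t₁) ≤ r / 2 :=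
    hg t₁ ht₁ (closedBall_mem_nhds _ (half_pos hr))
  have h₂ : ∀ᶠ j in l, r ≤ dist (γ j t₂) (g t₁) :=
    ((hg t₂ ht₂).dist tendsto_const_nhds).eventually (eventually_ge_nhds hr')
  filter_upwards [h₁, h₂] with j hj₁ hj₂
  have hI : uIcc t₁ t₂ ⊆ I := Set.OrdConnected.uIcc_subset ‹_› ht₁ ht₂
  calc ENNReal.ofReal (r / 2) = ENNReal.ofReal (r - r / 2) := by ring_nf
    _ ≤ μH[1] (γ j '' uIcc t₁ t₂ ∩ closedBall (g t₁) r) :=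
        ofReal_sub_le_hausdorffMeasure_image_inter_closedBall ((hγ j).mono hI) hj₁ hj₂
    _ ≤ μH[1] (γ j '' I ∩ closedBall (g t₁) r) := by gcongr

variable [SeparableSpace X]

theorem exists_countable_closedBall_cover_tsum_le (μ : ι → Measure X) {A U : Set X} {δ : ℝ}
    (h : ∀ a ∈ A, ∃ r ∈ Ioc 0 δ, closedBall a r ⊆ U ∧
      ∀ᶠ j in l, ENNReal.ofReal (r / 2) ≤ μ j (closedBall a r)) :
    ∃ (u : Set X) (r : X → ℝ), u.Countable ∧ (∀ a ∈ u, r a ∈ Ioc 0 δ) ∧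
      A ⊆ ⋃ a ∈ u, closedBall a (4 * r a) ∧
      ∑' a : u, ENNReal.ofReal (r a / 2) ≤ liminf (fun j => μ j U) l := by
  choose! r hr hrU hrμ using h
  obtain ⟨u, huA, hu_disj, hu_cover⟩ :=
    Vitali.exists_disjoint_subfamily_covering_enlargement_closedBall A id r δ
      (fun a ha => (hr a ha).2) 4 (by norm_num)
  refine ⟨u, r, ?_, fun a ha => hr a (huA ha), fun a ha => ?_, ?_⟩
  · exact (hu_disj.mono fun a => ball_subset_closedBall).countable_of_isOpen
      (fun _ _ => isOpen_ball) fun a ha => ⟨a, mem_ball_self (hr a (huA ha)).1⟩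
  · obtain ⟨b, hb, hab⟩ := hu_cover a ha
    exact mem_biUnion hb (hab (mem_closedBall_self (hr a ha).1.le))
  · rw [ENNReal.tsum_eq_iSup_sum]
    refine iSup_le fun v => ?_
    have hv : ∀ᶠ j in l, ∀ a ∈ v, ENNReal.ofReal (r a / 2) ≤ μ j (closedBall a (r a)) :=
      (eventually_all_finset v).2 fun a _ => hrμ a (huA a.2)
    refine le_liminf_of_le (by isBoundedDefault) (hv.mono fun j hj => ?_)
    calc ∑ a ∈ v, ENNReal.ofReal (r a / 2) ≤ ∑ a ∈ v, μ j (closedBall a (r a)) :=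
          Finset.sum_le_sum hj
      _ = μ j (⋃ a ∈ v, closedBall (a : X) (r a)) :=
          (measure_biUnion_finset (f := fun a : u => closedBall (a : X) (r a))
            (fun a _ b _ hab => hu_disj a.2 b.2 (Subtype.coe_injective.ne hab))
            fun _ _ => measurableSet_closedBall).symm
      _ ≤ μ j U := measure_mono (iUnion₂_subset fun a _ => hrU a (huA a.2))

/-- The constant is `2 · 2 · 4`: diameter versus radius, the density `1 / 2`, and the enlargement
factor of Vitali's covering lemma. -/
theorem hausdorffMeasure_le_mul_liminf_of_closedBall_le (μ : ι → Measure X) {A U : Set X}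
    (h : ∀ δ > 0, ∀ a ∈ A, ∃ r ∈ Ioc 0 δ, closedBall a r ⊆ U ∧
      ∀ᶠ j in l, ENNReal.ofReal (r / 2) ≤ μ j (closedBall a r)) :
    μH[1] A ≤ 16 * liminf (fun j => μ j U) l := by
  choose u r hu_count hr hu_cover hu_sum using fun m : ℕ =>
    exists_countable_closedBall_cover_tsum_le μ (h (1 / (m + 1)) Nat.one_div_pos_of_nat)
  have : ∀ m, Countable (u m) := fun m => (hu_count m).to_subtype
  have hdiam : ∀ m (a : u m),
      ediam (closedBall (a : X) (4 * r m a)) ≤ 16 * ENNReal.ofReal (r m a / 2) := by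
    intro m a
    rw [← ENNReal.ofReal_ofNat, ← ENNReal.ofReal_mul (by norm_num)]
    refine ediam_le_of_forall_dist_le fun x hx y hy => ?_
    have := dist_triangle_right x y a
    rw [mem_closedBall] at hx hy
    linarith
  have hsmall : Tendsto (fun m : ℕ => 16 * ENNReal.ofReal (1 / (m + 1) / 2)) atTop (𝓝 0) := by
    have h : Tendsto (fun m : ℕ => 1 / ((m : ℝ) + 1) / 2) atTop (𝓝 0) := by
      simpa using tendsto_one_div_add_atTop_nhds_zero_nat.div_const (2 : ℝ)
    simpa using ENNReal.Tendsto.const_mul (ENNReal.tendsto_ofReal h) (.inr ENNReal.ofNat_ne_top)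
  calc μH[1] A
      ≤ liminf (fun m => ∑' a : u m, ediam (closedBall (a : X) (4 * r m a)) ^ (1 : ℝ)) atTop :=
        Measure.hausdorffMeasure_le_liminf_tsum 1 A _ hsmall _
          (Eventually.of_forall fun m a => (hdiam m a).trans (by gcongr; exact (hr m a a.2).2))
          (Eventually.of_forall fun m x hx => by simpa using hu_cover m hx)
    _ ≤ 16 * liminf (fun j => μ j U) l := by
        refine liminf_le_of_frequently_le' (Frequently.of_forall fun m => ?_)
        simp only [ENNReal.rpow_one]
        calc ∑' a : u m, ediam (closedBall (a : X) (4 * r m a))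
            ≤ ∑' a : u m, 16 * ENNReal.ofReal (r m a / 2) := ENNReal.tsum_le_tsum (hdiam m)
          _ ≤ 16 * liminf (fun j => μ j U) l := by
              rw [ENNReal.tsum_mul_left]
              gcongr
              exact hu_sum m

theorem hausdorffMeasure_image_inter_le_mul_liminf (hγ : ∀ j, ContinuousOn (γ j) I)
    (hg : ∀ t ∈ I, Tendsto (γ · t) l (𝓝 (g t))) {U : Set X} (hU : IsOpen U) :
    μH[1] (g '' I ∩ U) ≤ 16 * liminf (fun j => μH[1] (γ j '' I ∩ U)) l := by
  rcases (g '' I).subsingleton_or_nontrivial with hK | hK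
  · have := Measure.nullSingletonClass_hausdorff X one_pos
    simp [(hK.anti inter_subset_left).measure_zero]
  have key := hausdorffMeasure_le_mul_liminf_of_closedBall_le
    (fun j => μH[1].restrict (γ j '' I)) (l := l) (A := g '' I ∩ U) (U := U) ?_
  · simpa [Measure.restrict_apply hU.measurableSet, inter_comm] using key
  rintro δ hδ _ ⟨⟨t₁, ht₁, rfl⟩, haU⟩
  obtain ⟨_, ⟨t₂, ht₂, rfl⟩, hne⟩ := hK.exists_ne (g t₁)
  obtain ⟨ε, hε, hεU⟩ := Metric.isOpen_iff.1 hU _ haU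
  set r := min δ (min (ε / 2) (dist (g t₂) (g t₁) / 2))
  have hr : 0 < r := lt_min hδ (lt_min (half_pos hε) (half_pos (dist_pos.2 hne)))
  have hrε : r < ε := (min_le_right _ _).trans_lt ((min_le_left _ _).trans_lt (half_lt_self hε))
  have hrd : r < dist (g t₂) (g t₁) :=
    (min_le_right _ _).trans_lt ((min_le_right _ _).trans_lt (half_lt_self (dist_pos.2 hne)))
  refine ⟨r, ⟨hr, min_le_left _ _⟩, (closedBall_subset_ball hrε).trans hεU, ?_⟩
  filter_upwards [eventually_ofReal_half_le_hausdorffMeasure_image_inter_closedBall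
    hγ hg ht₁ ht₂ hr hrd] with j hj
  rwa [Measure.restrict_apply measurableSet_closedBall, inter_comm]

theorem hausdorffMeasure_image_diff_le_mul [l.NeBot] (hγ : ∀ j, ContinuousOn (γ j) I)
    (hg : ∀ t ∈ I, Tendsto (γ · t) l (𝓝 (g t))) {T : Set X} (hT : MeasurableSet T)
    (hT' : μH[1] T ≠ ⊤) {m : ℝ≥0∞} (hm : ∀ᶠ j in l, μH[1] (γ j '' I \ T) ≤ m) :
    μH[1] (g '' I \ T) ≤ 16 * m := by
  refine ENNReal.le_of_forall_pos_le_add fun ε hε _ => ?_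
  have : IsFiniteMeasure (μH[1].restrict T) := isFiniteMeasure_restrict.2 hT'
  obtain ⟨F, hFT, hF, hTF⟩ := hT.exists_isClosed_sdiff_lt (μ := μH[1].restrict T)
    (measure_ne_top _ _) (ε := ε / 16) (by simpa using hε.ne')
  rw [Measure.restrict_apply (hT.diff hF.measurableSet), inter_eq_left.2 sdiff_subset] at hTF
  calc μH[1] (g '' I \ T) ≤ μH[1] (g '' I ∩ Fᶜ) :=
        measure_mono (inter_subset_inter_right _ (compl_subset_compl.2 hFT))
    _ ≤ 16 * liminf (fun j => μH[1] (γ j '' I ∩ Fᶜ)) l :=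
        hausdorffMeasure_image_inter_le_mul_liminf hγ hg hF.isOpen_compl
    _ ≤ 16 * (m + ε / 16) := by
        gcongr
        refine liminf_le_of_frequently_le' (hm.mono fun j hj => ?_).frequently
        calc μH[1] (γ j '' I ∩ Fᶜ) ≤ μH[1] ((γ j '' I \ T) ∪ (T \ F)) :=
              measure_mono fun x ⟨hx, hxF⟩ =>
                (em (x ∈ T)).elim (fun h => Or.inr ⟨h, hxF⟩) fun h => Or.inl ⟨hx, h⟩
          _ ≤ m + ε / 16 := (measure_union_le _ _).trans (add_le_add hj hTF.le)
    _ = 16 * m + ε := by rw [mul_add, ENNReal.mul_div_cancel (by norm_num) (by norm_num)]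

end Golab

theorem limit_path_lies_on_network_general {n : ℕ} (S : Set (Euc n))
    (hSmeas : MeasurableSet S)
    (b : Euc n → ℝ≥0∞) (hlsc : LowerSemicontinuousOn b S) (hbout : ∀ z ∉ S, b z = ⊤)
    (hfin : ∀ lam : ℝ≥0∞, lam ≠ ⊤ → μH[1] {z ∈ S | b z ≤ lam} ≠ ⊤)
    (C : ℝ≥0) (γ : ℕ → ℝ → Euc n) (γlim : ℝ → Euc n)
    (hlip : ∀ j, LipschitzWith C (γ j))
    (M : ℝ≥0∞) (hM : M ≠ ⊤) (hbound : ∀ j, pathCost b (γ j) ≤ M)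
    (hconv : TendstoUniformlyOn γ γlim atTop (Icc (0:ℝ) 1)) :
    μH[1] ((γlim '' Icc (0:ℝ) 1) \ S) = 0 ∧
    ∀ δ : ℝ≥0∞, 0 < δ → ∃ lam : ℝ≥0∞, lam ≠ ⊤ ∧
      μH[1] ((γlim '' Icc (0:ℝ) 1) \ {z ∈ S | b z ≤ lam}) ≤ δ := by
  have hSlam := hlsc.measurableSet_sep_le hSmeas
  have hlam_le : ∀ lam, ∀ z ∉ {z ∈ S | b z ≤ lam}, lam ≤ b z := fun lam z hz => by
    by_cases hzS : z ∈ S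
    · exact (not_le.1 fun h => hz ⟨hzS, h⟩).le
    · simp [hbout z hzS]
  have hlimit : ∀ lam : ℝ≥0∞, lam ≠ 0 → lam ≠ ⊤ →
      μH[1] ((γlim '' Icc (0:ℝ) 1) \ {z ∈ S | b z ≤ lam}) ≤ 16 * M / lam := by
    intro lam h0 htop
    rw [mul_div_assoc]
    refine hausdorffMeasure_image_diff_le_mul (fun j => (hlip j).continuous.continuousOn)
      (fun t ht => hconv.tendsto_at ht) (hSlam lam) (hfin lam htop) (.of_forall fun j => ?_)
    rw [ENNReal.le_div_iff_mul_le (.inl h0) (.inl htop), mul_comm]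
    exact (mul_hausdorffMeasure_image_diff_le_pathCost (hlip j) (hSlam lam)
      (hlam_le lam)).trans (hbound j)
  have htend : Tendsto (fun k : ℕ => 16 * M / k) atTop (𝓝 0) := by
    simpa using ENNReal.Tendsto.const_div ENNReal.tendsto_nat_nhds_top
      (.inr (ENNReal.mul_ne_top ENNReal.ofNat_ne_top hM))
  have hlimit_nat : ∀ᶠ k : ℕ in atTop,
      μH[1] ((γlim '' Icc (0:ℝ) 1) \ {z ∈ S | b z ≤ k}) ≤ 16 * M / k :=
    (eventually_ne_atTop 0).mono fun k hk =>
      hlimit k (Nat.cast_ne_zero.2 hk) (ENNReal.natCast_ne_top k)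
  refine ⟨nonpos_iff_eq_zero.1 (ge_of_tendsto htend (hlimit_nat.mono fun k hk => ?_)),
    fun δ hδ => ?_⟩
  · exact (measure_mono (sdiff_subset_sdiff_right (sep_subset S _))).trans hk
  · obtain ⟨k, hkδ, hk⟩ := ((htend.eventually (gt_mem_nhds hδ)).and hlimit_nat).exists
    exact ⟨k, ENNReal.natCast_ne_top k, hk.trans hkδ.le⟩

/-- Limit of paths with uniformly bounded cost, case `a = ∞`: under the finiteness assumption
on the sublevel sets `S_λ`, the uniform limit `γ` of `C`-Lipschitz paths with uniformly
bounded cost satisfies `H^1(γ([0,1]) \ S) = 0`, and for each `δ > 0` there is `λ < ∞` with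
`H^1(γ([0,1]) \ S_λ) ≤ δ`. -/
theorem limit_path_lies_on_network {n : ℕ} (S : Set (Euc n))
    (hSrect : Countably1Rectifiable S) (hSmeas : MeasurableSet S)
    (b : Euc n → ℝ≥0∞) (hlsc : LowerSemicontinuousOn b S) (hbout : ∀ z ∉ S, b z = ⊤)
    (hfin : ∀ lam : ℝ≥0∞, lam ≠ ⊤ → μH[1] {z ∈ S | b z ≤ lam} ≠ ⊤)
    (C : ℝ≥0) (γ : ℕ → ℝ → Euc n) (γlim : ℝ → Euc n)
    (hlip : ∀ j, LipschitzWith C (γ j))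
    (hcube : ∀ j, ∀ t ∈ Icc (0:ℝ) 1, γ j t ∈ cube n)
    (M : ℝ≥0∞) (hM : M ≠ ⊤) (hbound : ∀ j, pathCost b (γ j) ≤ M)
    (hconv : TendstoUniformlyOn γ γlim atTop (Icc (0:ℝ) 1)) :
    μH[1] ((γlim '' Icc (0:ℝ) 1) \ S) = 0 ∧
    ∀ δ : ℝ≥0∞, 0 < δ → ∃ lam : ℝ≥0∞, lam ≠ ⊤ ∧
      μH[1] ((γlim '' Icc (0:ℝ) 1) \ {z ∈ S | b z ≤ lam}) ≤ δ :=
  limit_path_lies_on_network_general S hSmeas b hlsc hbout hfin C γ γlim hlip M hM hbound hconv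
end
end

section
/- There exist a countably 1-rectifiable set S ⊂ [0,1]^2, namely S = ⋃_j {1/j} × [0,1] with b ≡ 1 on S and a = ∞, and points x_j = (1/j, 0), y_j = (1/j, 1) converging to x = (0,0), y = (0,1), such that d_{S,∞,b}(x_j, y_j) = 1 for all j but d_{S,∞,b}(x,y) = ∞; hence without the finiteness assumption H^1(S_λ) < ∞ the urban metric fails to be lower semi-continuous. -/
open MeasureTheory Set Filter Topology
open scoped ENNReal NNReal

noncomputable section

/-- Travel cost infimum over unconstrained Lipschitz paths in the plane. -/
def freeDist (bext : Euc 2 → ℝ≥0∞) (x y : Euc 2) : ℝ≥0∞ :=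
  sInf {c | ∃ (γ : ℝ → Euc 2) (K : ℝ≥0), LipschitzWith K γ ∧
    γ 0 = x ∧ γ 1 = y ∧ c = pathCost bext γ}

/-- The point `(s, t)` of the plane. -/
def pt (s t : ℝ) : Euc 2 := (WithLp.equiv 2 (Fin 2 → ℝ)).symm ![s, t]

/-- The network `S = ⋃_{j ≥ 1} {1/j} × [0,1]`. -/
def S12 : Set (Euc 2) :=
  {x | (∃ j : ℕ, 1 ≤ j ∧ x 0 = 1 / (j : ℝ)) ∧ x 1 ∈ Icc (0:ℝ) 1}

open Classical in
/-- Friction coefficient `b ≡ 1` on `S`, cost `a = ∞` off the network. -/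
def b12 (z : Euc 2) : ℝ≥0∞ := if z ∈ S12 then 1 else ⊤

/-! A path of finite cost has velocity `0` almost everywhere off the network. Its first
coordinate `u` starts at `0`; off the network `u' = 0`, and on the network `u` takes values in
the countable set `{1/j}`, where `u' = 0` almost everywhere because almost every point of a
level set accumulates in it. So `u ≡ 0`: the path never meets the network, hence is constant,
which is impossible from `(0,0)` to `(0,1)`. On the other hand the vertical segment through
`(1/j, 0)` has cost `1`, and no path does better since `b12 ≥ 1` and a path is at least as long
as the distance between its endpoints. -/

section LipschitzCurve

variable {E : Type*} [NormedAddCommGroup E] [NormedSpace ℝ E]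

theorem LipschitzWith.eqOn_of_ae_deriv_eq_zero [FiniteDimensional ℝ E] {f : ℝ → E}
    {K : ℝ≥0} (hf : LipschitzWith K f) {a b : ℝ} (h : ∀ᵐ t, t ∈ uIcc a b → deriv f t = 0) :
    EqOn f (fun _ => f a) (uIcc a b) := by
  have hderiv : ∀ᵐ t, t ∈ uIcc a b → HasDerivAt f 0 t := by
    filter_upwards [hf.ae_differentiableAt_real, h] with t hdiff hzero ht
    exact hzero ht ▸ hdiff.hasDerivAt
  obtain ⟨C, hC⟩ :=
    hf.lipschitzOnWith.absolutelyContinuousOnInterval.const_of_ae_hasDerivAt_zero hderiv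
  intro t ht
  rw [hC t ht, hC a left_mem_uIcc]

theorem LipschitzWith.enorm_sub_le_lintegral_deriv [FiniteDimensional ℝ E] {f : ℝ → E}
    {K : ℝ≥0} (hf : LipschitzWith K f) {a b : ℝ} (hab : a ≤ b) :
    ‖f b - f a‖ₑ ≤ ∫⁻ t in Icc a b, ‖deriv f t‖ₑ := by
  obtain ⟨ℓ, hℓ_norm, hℓ⟩ := exists_dual_vector'' ℝ (f b - f a)
  have hℓf : LipschitzWith (‖ℓ‖₊ * K) (ℓ ∘ f) := ℓ.lipschitz.comp hf
  have hderiv : ∀ᵐ t, ‖deriv (ℓ ∘ f) t‖ₑ ≤ ‖deriv f t‖ₑ := by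
    filter_upwards [hf.ae_differentiableAt_real] with t ht
    rw [(ℓ.hasFDerivAt.comp_hasDerivAt t ht.hasDerivAt).deriv, enorm_le_iff_norm_le]
    exact (ℓ.le_of_opNorm_le hℓ_norm _).trans_eq (one_mul _)
  calc ‖f b - f a‖ₑ = ‖∫ t in a..b, deriv (ℓ ∘ f) t‖ₑ := by
        rw [hℓf.lipschitzOnWith.absolutelyContinuousOnInterval.integral_deriv_eq_sub,
          Function.comp_apply, Function.comp_apply, ← map_sub, hℓ]
        simp
    _ ≤ ∫⁻ t in Ioc a b, ‖deriv (ℓ ∘ f) t‖ₑ := by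
        rw [intervalIntegral.integral_of_le hab]; exact enorm_integral_le_lintegral_enorm _
    _ ≤ ∫⁻ t in Icc a b, ‖deriv f t‖ₑ :=
        (lintegral_mono_ae (ae_restrict_of_ae hderiv)).trans
          (lintegral_mono_set Ioc_subset_Icc_self)

theorem ae_deriv_eq_zero_of_mem_countable {f : ℝ → E} {C : Set E} (hC : C.Countable) :
    ∀ᵐ t, f t ∈ C → deriv f t = 0 := by
  have hisolated : (⋃ c ∈ C, {t ∈ f ⁻¹' {c} | 𝓝[f ⁻¹' {c} ∩ Ioi t] t = ⊥}).Countable :=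
    hC.biUnion fun _ _ => countable_setOfPred_isolated_right_within
  -- off a countable set, each point of a level set is a right accumulation point of it
  filter_upwards [hisolated.ae_notMem volume] with t ht htC
  by_cases hdiff : DifferentiableAt ℝ f t
  swap
  · exact deriv_zero_of_not_differentiableAt hdiff
  have hacc : AccPt t (𝓟 (f ⁻¹' {f t})) := by
    rw [accPt_principal_iff_nhdsWithin]
    have : (𝓝[f ⁻¹' {f t} ∩ Ioi t] t).NeBot := ⟨fun h => ht (mem_biUnion htC ⟨rfl, h⟩)⟩
    exact this.mono (nhdsWithin_mono _ fun s hs => ⟨hs.1, hs.2.ne'⟩)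
  exact hacc.uniqueDiffWithinAt.eq_deriv _ hdiff.hasDerivAt.hasDerivWithinAt
    ((hasDerivWithinAt_const t _ (f t)).congr (fun s hs => hs) rfl)

end LipschitzCurve

section PathCost

variable {n : ℕ} {bext : Euc n → ℝ≥0∞} {γ : ℝ → Euc n}

theorem LipschitzWith.enorm_sub_le_pathCost (hb : ∀ z, 1 ≤ bext z) {K : ℝ≥0}
    (hγ : LipschitzWith K γ) : ‖γ 1 - γ 0‖ₑ ≤ pathCost bext γ :=
  (hγ.enorm_sub_le_lintegral_deriv zero_le_one).trans <| lintegral_mono fun t => by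
    rw [← ofReal_norm]
    exact le_mul_of_one_le_left' (hb _)

theorem ae_deriv_eq_zero_of_pathCost_ne_top (hb : Measurable bext) (hγ : Continuous γ)
    (h : pathCost bext γ ≠ ⊤) : ∀ᵐ t, t ∈ Icc (0 : ℝ) 1 → bext (γ t) = ⊤ → deriv γ t = 0 := by
  have hmeas : AEMeasurable (fun t => bext (γ t) * ENNReal.ofReal ‖deriv γ t‖)
      (volume.restrict (Icc 0 1)) :=
    ((hb.comp hγ.measurable).mul (measurable_deriv γ).norm.ennreal_ofReal).aemeasurable
  filter_upwards [(ae_restrict_iff' measurableSet_Icc).1 (ae_lt_top' hmeas h)]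
    with t hfinite ht htop
  by_contra hne
  refine (hfinite ht).ne ?_
  rw [htop, ENNReal.top_mul (by simpa using hne)]

end PathCost

@[simp] lemma pt_apply_zero (s t : ℝ) : pt s t 0 = s := rfl
@[simp] lemma pt_apply_one (s t : ℝ) : pt s t 1 = t := rfl

lemma pt_eq_smul_add_smul (s t : ℝ) : pt s t = s • pt 1 0 + t • pt 0 1 := by
  ext i; fin_cases i <;> simp

lemma pt_one_sub_pt_zero (s : ℝ) : pt s 1 - pt s 0 = pt 0 1 := by
  ext i; fin_cases i <;> simp

lemma norm_pt_zero_one : ‖pt 0 1‖ = 1 := by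
  simp [EuclideanSpace.norm_eq, Fin.sum_univ_two]

lemma hasDerivAt_pt_right (s t : ℝ) : HasDerivAt (pt s) (pt 0 1) t := by
  rw [funext (pt_eq_smul_add_smul s)]
  simpa using ((hasDerivAt_id t).smul_const (pt 0 1)).const_add (s • pt 1 0)

lemma lipschitzWith_pt_right (s : ℝ) : LipschitzWith 1 (pt s) :=
  lipschitzWith_of_nnnorm_deriv_le (fun t => (hasDerivAt_pt_right s t).differentiableAt)
    fun t => by rw [(hasDerivAt_pt_right s t).deriv, ← NNReal.coe_le_coe]; simp [norm_pt_zero_one]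

lemma continuous_pt_left (t : ℝ) : Continuous fun s => pt s t := by
  simp_rw [pt_eq_smul_add_smul _ t]
  fun_prop

lemma measurableSet_S12 : MeasurableSet S12 := by
  have hx : MeasurableSet {s : ℝ | ∃ j : ℕ, 1 ≤ j ∧ s = 1 / j} :=
    ((countable_range fun j : ℕ => 1 / (j : ℝ)).mono
      (by rintro _ ⟨j, -, rfl⟩; exact ⟨j, rfl⟩)).measurableSet
  exact ((EuclideanSpace.proj (0 : Fin 2)).continuous.measurable hx).inter
    ((EuclideanSpace.proj (1 : Fin 2)).continuous.measurable measurableSet_Icc)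

lemma measurable_b12 : Measurable b12 :=
  Measurable.ite measurableSet_S12 measurable_const measurable_const

lemma one_le_b12 (z : Euc 2) : 1 ≤ b12 z := by
  unfold b12; split_ifs <;> simp

lemma b12_eq_top_of_notMem {z : Euc 2} (hz : z ∉ S12) : b12 z = ⊤ := if_neg hz

theorem countably1Rectifiable_S12 : Countably1Rectifiable S12 := by
  refine ⟨fun i => pt (1 / ((i : ℝ) + 1)), fun _ => Icc 0 1,
    fun _ => ⟨1, (lipschitzWith_pt_right _).lipschitzOnWith⟩,
    fun _ => Metric.isBounded_Icc 0 1, ?_⟩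
  ext x
  simp only [mem_iUnion, mem_image]
  constructor
  · rintro ⟨⟨j, hj, hx0⟩, hx1⟩
    obtain ⟨i, rfl⟩ := Nat.exists_eq_add_of_le' hj
    refine ⟨i, x 1, hx1, ?_⟩
    ext k; fin_cases k <;> simp [hx0]
  · rintro ⟨i, t, ht, rfl⟩
    exact ⟨⟨i + 1, by omega, by simp⟩, ht⟩

theorem tendsto_pt_one_div (t : ℝ) :
    Tendsto (fun j : ℕ => pt (1 / (j : ℝ)) t) atTop (𝓝 (pt 0 t)) :=
  (continuous_pt_left t).continuousAt.tendsto.comp tendsto_one_div_atTop_nhds_zero_nat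

theorem pathCost_b12_pt (j : ℕ) (hj : 1 ≤ j) : pathCost b12 (pt (1 / (j : ℝ))) = 1 := by
  have hon : ∀ t ∈ Icc (0 : ℝ) 1,
      b12 (pt (1 / (j : ℝ)) t) * ENNReal.ofReal ‖deriv (pt (1 / (j : ℝ))) t‖ = 1 := by
    intro t ht
    rw [(hasDerivAt_pt_right _ t).deriv, norm_pt_zero_one, b12, if_pos ⟨⟨j, hj, rfl⟩, ht⟩]
    simp
  rw [pathCost, setLIntegral_congr_fun measurableSet_Icc hon]
  simp

theorem freeDist_b12_pt (j : ℕ) (hj : 1 ≤ j) :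
    freeDist b12 (pt (1 / (j : ℝ)) 0) (pt (1 / (j : ℝ)) 1) = 1 := by
  refine le_antisymm
    (sInf_le ⟨_, 1, lipschitzWith_pt_right _, rfl, rfl, (pathCost_b12_pt j hj).symm⟩)
    (le_sInf ?_)
  rintro _ ⟨γ, K, hγ, hγ0, hγ1, rfl⟩
  calc (1 : ℝ≥0∞) = ‖γ 1 - γ 0‖ₑ := by
        rw [hγ0, hγ1, pt_one_sub_pt_zero, ← ofReal_norm, norm_pt_zero_one,
          ENNReal.ofReal_one]
    _ ≤ pathCost b12 γ := hγ.enorm_sub_le_pathCost one_le_b12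

theorem pathCost_b12_eq_top {γ : ℝ → Euc 2} {K : ℝ≥0} (hγ : LipschitzWith K γ)
    (hγ0 : γ 0 = pt 0 0) (hγ1 : γ 1 = pt 0 1) : pathCost b12 γ = ⊤ := by
  by_contra hfinite
  have hderiv_off : ∀ᵐ t, t ∈ uIcc (0 : ℝ) 1 → γ t ∉ S12 → deriv γ t = 0 := by
    filter_upwards [ae_deriv_eq_zero_of_pathCost_ne_top measurable_b12 hγ.continuous hfinite]
      with t h ht hS
    exact h (uIcc_of_le (zero_le_one' ℝ) ▸ ht) (b12_eq_top_of_notMem hS)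
  set u : ℝ → ℝ := EuclideanSpace.proj (𝕜 := ℝ) (0 : Fin 2) ∘ γ
  have hu : LipschitzWith _ u := (EuclideanSpace.proj (𝕜 := ℝ) (0 : Fin 2)).lipschitz.comp hγ
  have hu' : ∀ᵐ t, t ∈ uIcc (0 : ℝ) 1 → deriv u t = 0 := by
    filter_upwards [hderiv_off, hγ.ae_differentiableAt_real,
      ae_deriv_eq_zero_of_mem_countable (f := u) (countable_range fun j : ℕ => 1 / (j : ℝ))]
      with t hoff_t hdiff hlevel ht
    by_cases hS : γ t ∈ S12
    · obtain ⟨⟨j, -, hj⟩, -⟩ := hS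
      exact hlevel ⟨j, hj.symm⟩
    · rw [((EuclideanSpace.proj 0).hasFDerivAt.comp_hasDerivAt t hdiff.hasDerivAt).deriv,
        hoff_t ht hS, map_zero]
  have hnotMem : ∀ t ∈ uIcc (0 : ℝ) 1, γ t ∉ S12 := by
    rintro t ht ⟨⟨j, hj, hγt⟩, -⟩
    have hut : u t = u 0 := hu.eqOn_of_ae_deriv_eq_zero hu' ht
    change γ t 0 = γ 0 0 at hut
    rw [hγt, hγ0, pt_apply_zero] at hut
    exact one_div_ne_zero (Nat.cast_ne_zero.2 (by omega)) hut
  have := hγ.eqOn_of_ae_deriv_eq_zero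
    (by filter_upwards [hderiv_off] with t h ht using h ht (hnotMem t ht)) right_mem_uIcc
  simpa [hγ0, hγ1] using congrArg (· 1) this

theorem freeDist_b12_eq_top : freeDist b12 (pt 0 0) (pt 0 1) = ⊤ := by
  rw [freeDist, sInf_eq_top]
  rintro _ ⟨γ, K, hγ, hγ0, hγ1, rfl⟩
  exact pathCost_b12_eq_top hγ hγ0 hγ1

/-- Counterexample: for `S = ⋃_j {1/j}×[0,1]`, `b ≡ 1`, `a = ∞`, the urban metric satisfies
`d(x_j, y_j) = 1` for `x_j = (1/j,0)`, `y_j = (1/j,1)`, while `x_j → x = (0,0)`,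
`y_j → y = (0,1)` and `d(x,y) = ∞`; so without the finiteness assumption `H^1(S_λ) < ∞`
the urban metric is not lower semi-continuous. -/
theorem urbanDist_not_lsc_counterexample :
    Countably1Rectifiable S12 ∧
    Tendsto (fun j : ℕ => pt (1 / (j : ℝ)) 0) atTop (𝓝 (pt 0 0)) ∧
    Tendsto (fun j : ℕ => pt (1 / (j : ℝ)) 1) atTop (𝓝 (pt 0 1)) ∧
    (∀ j : ℕ, 1 ≤ j → freeDist b12 (pt (1 / (j : ℝ)) 0) (pt (1 / (j : ℝ)) 1) = 1) ∧
    freeDist b12 (pt 0 0) (pt 0 1) = ⊤ :=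
  ⟨countably1Rectifiable_S12, tendsto_pt_one_div 0, tendsto_pt_one_div 1, freeDist_b12_pt,
    freeDist_b12_eq_top⟩

end
end
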